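/- arXiv:math/0606375 — 8 statements merged into one kernel-verified Lean document; each statement's English description precedes it below -/
import Mathlib

section
/- Every simplicial tree with two or more facets has at least two distinct leaves. -/
variable {V : Type*} [DecidableEq V]

/-- A facet complex: no facet contains another. -/
def IsFacetComplex (Δ : Finset (Finset V)) : Prop :=
  ∀ F ∈ Δ, ∀ G ∈ Δ, F ⊆ G → F = G

/-- `F` is a leaf of `Δ`. -/
def IsLeaf (Δ : Finset (Finset V)) (F : Finset V) : Prop :=
  F ∈ Δ ∧ (Δ = {F} ∨ ∃ G ∈ Δ.erase F, ∀ H ∈ Δ.erase F, H ∩ F ⊆ G ∩ F)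

/-- `Δ` is a forest: every nonempty subset has a leaf. -/
def IsForest (Δ : Finset (Finset V)) : Prop :=
  ∀ Γ ⊆ Δ, Γ.Nonempty → ∃ F, IsLeaf Γ F

/-- `Δ` is connected: any two facets are joined by a path of consecutively
intersecting facets. -/
def FCConnected (Δ : Finset (Finset V)) : Prop :=
  ∀ F ∈ Δ, ∀ G ∈ Δ,
    Relation.ReflTransGen (fun A B => A ∈ Δ ∧ B ∈ Δ ∧ (A ∩ B).Nonempty) F G

/-- A (simplicial) tree is a connected forest. -/
def IsTree (Δ : Finset (Finset V)) : Prop := FCConnected Δ ∧ IsForest Δ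

/-- A cycle: a nonempty facet complex with no leaf, every nonempty proper
subset of which has a leaf. -/
def IsCycle (Δ : Finset (Finset V)) : Prop :=
  Δ.Nonempty ∧ (¬ ∃ F, IsLeaf Δ F) ∧ ∀ Γ ⊂ Δ, Γ.Nonempty → ∃ F, IsLeaf Γ F

/-- Strong neighbors in `Δ`. -/
def StrongNeighbor (Δ : Finset (Finset V)) (F G : Finset V) : Prop :=
  F ∈ Δ ∧ G ∈ Δ ∧ F ≠ G ∧ ∀ H ∈ Δ, F ∩ G ⊆ H → H = F ∨ H = G

/-!
Peel off a leaf `F` of the forest, with joint `G`. What remains is a smaller forest, so by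
induction it has two leaves, and the one different from `G` is still a leaf once `F` is put
back: `F` meets it only inside `G`, so `F` is dominated by that leaf's old joint.
-/

open Finset

theorem IsForest.subset {Δ Γ : Finset (Finset V)} (hΔ : IsForest Δ) (h : Γ ⊆ Δ) :
    IsForest Γ :=
  fun Γ' hΓ' hne => hΔ Γ' (hΓ'.trans h) hne

theorem isLeaf_pair {F G : Finset V} (hFG : F ≠ G) : IsLeaf {F, G} G := by
  refine ⟨by simp, Or.inr ⟨F, by simp [hFG], fun H hH => ?_⟩⟩
  obtain ⟨hHG, rfl | rfl⟩ : H ≠ G ∧ (H = F ∨ H = G) := by simpa using hH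
  · rfl
  · exact absurd rfl hHG

theorem IsLeaf.of_erase {Δ : Finset (Finset V)} {F G L : Finset V}
    (hG : G ∈ Δ.erase F) (hjoint : ∀ H ∈ Δ.erase F, H ∩ F ⊆ G ∩ F)
    (hL : IsLeaf (Δ.erase F) L) (hLG : L ≠ G) : IsLeaf Δ L := by
  obtain ⟨hLΔ, hsingle | ⟨J, hJ, hJmax⟩⟩ := hL
  · exact absurd (by simpa [hsingle] using hG) hLG.symm
  have hGJ : G ∩ L ⊆ J ∩ L := hJmax G (mem_erase.2 ⟨hLG.symm, hG⟩)
  refine ⟨mem_of_mem_erase hLΔ, Or.inr ⟨J, ?_, fun H hH => ?_⟩⟩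
  · rw [erase_right_comm] at hJ
    exact mem_of_mem_erase hJ
  by_cases hHF : H = F
  · subst hHF
    intro x hx
    have hxG : x ∈ G := (mem_inter.1 (hjoint L hLΔ (by simpa [and_comm] using hx))).1
    exact hGJ (mem_inter.2 ⟨hxG, (mem_inter.1 hx).2⟩)
  · rw [erase_right_comm] at hJmax
    exact hJmax H (mem_erase.2 ⟨hHF, hH⟩)

theorem IsForest.exists_two_leaves {Δ : Finset (Finset V)} (hΔ : IsForest Δ)
    (hcard : 2 ≤ #Δ) : ∃ F G, F ≠ G ∧ IsLeaf Δ F ∧ IsLeaf Δ G := by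
  induction Δ using Finset.strongInduction with
  | _ Δ ih =>
  obtain ⟨F, hFΔ, hF⟩ := hΔ Δ subset_rfl (card_pos.1 (by omega))
  obtain ⟨G, hG, hjoint⟩ := hF.resolve_left fun h => by simp [h] at hcard
  obtain ⟨L, hL, hLleaf⟩ : ∃ L ∈ Δ.erase F, IsLeaf Δ L := by
    rcases Nat.lt_or_ge 1 #(Δ.erase F) with hrest | hrest
    · obtain ⟨L₁, L₂, hne, hL₁, hL₂⟩ :=
        ih _ (erase_ssubset hFΔ) (hΔ.subset (erase_subset F Δ)) hrest
      by_cases hL₁G : L₁ = G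
      · exact ⟨L₂, hL₂.1, hL₂.of_erase hG hjoint (hL₁G ▸ hne.symm)⟩
      · exact ⟨L₁, hL₁.1, hL₁.of_erase hG hjoint hL₁G⟩
    · have hrest : Δ.erase F = {G} :=
        eq_singleton_iff_unique_mem.2 ⟨hG, fun H hH => card_le_one.1 hrest H hH G hG⟩
      refine ⟨G, hG, ?_⟩
      rw [← insert_erase hFΔ, hrest]
      exact isLeaf_pair (ne_of_mem_erase hG).symm
  exact ⟨F, L, (ne_of_mem_erase hL).symm, ⟨hFΔ, hF⟩, hLleaf⟩

theorem tree_has_two_leaves_general (Δ : Finset (Finset V))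
    (htree : IsTree Δ) (hcard : 2 ≤ Δ.card) :
    ∃ F G, F ≠ G ∧ IsLeaf Δ F ∧ IsLeaf Δ G :=
  htree.2.exists_two_leaves hcard

theorem tree_has_two_leaves (Δ : Finset (Finset V)) (hΔ : IsFacetComplex Δ)
    (htree : IsTree Δ) (hcard : 2 ≤ Δ.card) :
    ∃ F G, F ≠ G ∧ IsLeaf Δ F ∧ IsLeaf Δ G :=
  tree_has_two_leaves_general Δ htree hcard
end

section
/- Every cycle (as a facet complex) is connected. -/
variable {V : Type*} [DecidableEq V]

/-! A cycle has no leaf, while every nonempty proper subcomplex has one. The connected component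
of a facet is such a subcomplex, and since it meets no facet outside it, any leaf of the component
would be a leaf of the whole complex; so the component is everything. -/

theorem IsLeaf.of_isolated {Γ Δ : Finset (Finset V)} {F : Finset V} (hF : IsLeaf Γ F)
    (hΓΔ : Γ ⊂ Δ) (hsep : ∀ A ∈ Γ, ∀ B ∈ Δ, B ∉ Γ → Disjoint A B) : IsLeaf Δ F := by
  obtain ⟨hFΓ, hΓF⟩ := hF
  have houter : ∀ H ∈ Δ, H ∉ Γ → ∀ G, H ∩ F ⊆ G ∩ F := fun H hH hHΓ G => by
    rw [Finset.disjoint_iff_inter_eq_empty.1 (hsep F hFΓ H hH hHΓ).symm]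
    exact Finset.empty_subset _
  refine ⟨hΓΔ.subset hFΓ, Or.inr ?_⟩
  rcases hΓF with rfl | ⟨G, hG, hGmax⟩
  · obtain ⟨G, hGΔ, hGF⟩ := Finset.exists_of_ssubset hΓΔ
    refine ⟨G, Finset.mem_erase.2 ⟨by simpa using hGF, hGΔ⟩, fun H hH => houter H
      (Finset.mem_of_mem_erase hH) (by simpa using Finset.ne_of_mem_erase hH) G⟩
  · refine ⟨G, Finset.erase_subset_erase F hΓΔ.subset hG, fun H hH => ?_⟩
    by_cases hHΓ : H ∈ Γ
    · exact hGmax H (Finset.mem_erase.2 ⟨Finset.ne_of_mem_erase hH, hHΓ⟩)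
    · exact houter H (Finset.mem_of_mem_erase hH) hHΓ G

noncomputable def facetComponent (Δ : Finset (Finset V)) (F : Finset V) : Finset (Finset V) :=
  open Classical in
  Δ.filter fun A => Relation.ReflTransGen (fun A B => A ∈ Δ ∧ B ∈ Δ ∧ (A ∩ B).Nonempty) F A

theorem mem_facetComponent {Δ : Finset (Finset V)} {F A : Finset V} :
    A ∈ facetComponent Δ F ↔
      A ∈ Δ ∧ Relation.ReflTransGen (fun A B => A ∈ Δ ∧ B ∈ Δ ∧ (A ∩ B).Nonempty) F A := by
  classical
  simp only [facetComponent, Finset.mem_filter]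

theorem facetComponent_subset (Δ : Finset (Finset V)) (F : Finset V) :
    facetComponent Δ F ⊆ Δ :=
  fun _ hA => (mem_facetComponent.1 hA).1

theorem self_mem_facetComponent {Δ : Finset (Finset V)} {F : Finset V} (hF : F ∈ Δ) :
    F ∈ facetComponent Δ F :=
  mem_facetComponent.2 ⟨hF, .refl⟩

theorem disjoint_of_mem_facetComponent_of_notMem {Δ : Finset (Finset V)} {F A B : Finset V}
    (hA : A ∈ facetComponent Δ F) (hB : B ∈ Δ) (hBF : B ∉ facetComponent Δ F) :
    Disjoint A B := by
  rw [Finset.disjoint_iff_inter_eq_empty, ← Finset.not_nonempty_iff_eq_empty]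
  intro hAB
  obtain ⟨hAΔ, hFA⟩ := mem_facetComponent.1 hA
  exact hBF (mem_facetComponent.2 ⟨hB, hFA.tail ⟨hAΔ, hB, hAB⟩⟩)

theorem facetComponent_eq_of_forall_ssubset_isLeaf {Δ : Finset (Finset V)} {F : Finset V}
    (hF : F ∈ Δ) (hnoleaf : ¬ ∃ F, IsLeaf Δ F)
    (hleaf : ∀ Γ ⊂ Δ, Γ.Nonempty → ∃ F, IsLeaf Γ F) : facetComponent Δ F = Δ := by
  by_contra hne
  have hproper : facetComponent Δ F ⊂ Δ :=
    (facetComponent_subset Δ F).lt_of_ne hne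
  obtain ⟨L, hL⟩ := hleaf _ hproper ⟨F, self_mem_facetComponent hF⟩
  exact hnoleaf ⟨L, hL.of_isolated hproper fun _ hA _ hB hBF =>
    disjoint_of_mem_facetComponent_of_notMem hA hB hBF⟩

theorem cycle_connected_general (Δ : Finset (Finset V))
    (hcyc : IsCycle Δ) : FCConnected Δ := by
  intro F hF G hG
  obtain ⟨-, hnoleaf, hleaf⟩ := hcyc
  rw [← facetComponent_eq_of_forall_ssubset_isLeaf hF hnoleaf hleaf] at hG
  exact (mem_facetComponent.1 hG).2

theorem cycle_connected (Δ : Finset (Finset V)) (hΔ : IsFacetComplex Δ)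
    (hcyc : IsCycle Δ) : FCConnected Δ :=
  cycle_connected_general Δ hcyc
end

section
/- Let Δ be a facet complex, and let F₁, …, Fₙ be distinct facets with n ≥ 3 such that F₁ ∼_Δ F₂ ∼_Δ ⋯ ∼_Δ Fₙ ∼_Δ F₁ (consecutive facets are strong neighbors, cyclically). Then the facet complex {F₁, …, Fₙ} has no leaf. -/
/-!
If `F` is a leaf of `Γ ⊆ Δ`, the facet `W` witnessing this contains `F ∩ H` for every other
`H ∈ Γ`; when `H` is a strong neighbor of `F` in `Δ`, this forces `W = H`. Hence a leaf has at
most one strong neighbor in `Γ`, while every facet of the circuit has two distinct ones, its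
predecessor and its successor, since the circuit has length at least three.
-/


variable {V : Type*} [DecidableEq V]

theorem StrongNeighbor.symm {Δ : Finset (Finset V)} {F G : Finset V}
    (h : StrongNeighbor Δ F G) : StrongNeighbor Δ G F := by
  obtain ⟨hF, hG, hne, hmax⟩ := h
  refine ⟨hG, hF, hne.symm, fun H hH hsub => (hmax H hH ?_).symm⟩
  rwa [Finset.inter_comm]

theorem StrongNeighbor.eq_of_inter_subset {Δ : Finset (Finset V)} {F G W : Finset V}
    (h : StrongNeighbor Δ F G) (hW : W ∈ Δ) (hWF : W ≠ F) (hsub : F ∩ G ⊆ W) : W = G :=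
  (h.2.2.2 W hW hsub).resolve_left hWF

theorem IsLeaf.eq_of_strongNeighbor {Γ Δ : Finset (Finset V)} {F G G' : Finset V}
    (hΓ : Γ ⊆ Δ) (hF : IsLeaf Γ F) (hG : G ∈ Γ) (hG' : G' ∈ Γ)
    (h : StrongNeighbor Δ F G) (h' : StrongNeighbor Δ F G') : G = G' := by
  rcases hF.2 with hsingle | ⟨W, hW, hWmax⟩
  · rw [hsingle, Finset.mem_singleton] at hG
    exact absurd hG.symm h.2.2.1
  · obtain ⟨hWF, hWΓ⟩ := Finset.mem_erase.mp hW
    have witness_eq {K : Finset V} (hK : K ∈ Γ) (hFK : StrongNeighbor Δ F K) : W = K := by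
      refine hFK.eq_of_inter_subset (hΓ hWΓ) hWF fun x hx => ?_
      have hK' : K ∈ Γ.erase F := Finset.mem_erase.mpr ⟨hFK.2.2.1.symm, hK⟩
      exact (Finset.mem_inter.mp (hWmax K hK' (by rwa [Finset.inter_comm]))).1
    exact (witness_eq hG h).symm.trans (witness_eq hG' h')

theorem Fin.add_one_ne_sub_one {n : ℕ} (i : Fin (n + 3)) : i + 1 ≠ i - 1 := by
  intro h
  rw [sub_eq_add_neg, add_left_cancel_iff] at h
  have two_eq_zero : (1 + 1 : Fin (n + 3)) = 0 := by
    nth_rewrite 2 [h]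
    exact add_neg_cancel 1
  rw [Fin.ext_iff, Fin.val_add, Fin.val_one, Fin.val_zero, Nat.mod_eq_of_lt (by omega)]
    at two_eq_zero
  omega

theorem strong_neighbor_circuit_no_leaf_general (Δ : Finset (Finset V))
    (n : ℕ) (F : Fin (n + 3) → Finset V)
    (hinj : Function.Injective F)
    (hcirc : ∀ i : Fin (n + 3), StrongNeighbor Δ (F i) (F (i + 1))) :
    ¬ ∃ G, IsLeaf (Finset.image F Finset.univ) G := by
  rintro ⟨L, hL⟩
  obtain ⟨i, -, rfl⟩ := Finset.mem_image.mp hL.1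
  have hsub : Finset.image F Finset.univ ⊆ Δ := by
    simpa only [Finset.image_subset_iff] using fun j _ => (hcirc j).1
  have hprev : StrongNeighbor Δ (F i) (F (i - 1)) := by
    simpa only [sub_add_cancel] using (hcirc (i - 1)).symm
  have hnext_eq_prev : F (i + 1) = F (i - 1) :=
    hL.eq_of_strongNeighbor hsub (Finset.mem_image_of_mem _ (Finset.mem_univ _))
      (Finset.mem_image_of_mem _ (Finset.mem_univ _)) (hcirc i) hprev
  exact i.add_one_ne_sub_one (hinj hnext_eq_prev)

theorem strong_neighbor_circuit_no_leaf (Δ : Finset (Finset V))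
    (hΔ : IsFacetComplex Δ) (n : ℕ) (F : Fin (n + 3) → Finset V)
    (hinj : Function.Injective F)
    (hcirc : ∀ i : Fin (n + 3), StrongNeighbor Δ (F i) (F (i + 1))) :
    ¬ ∃ G, IsLeaf (Finset.image F Finset.univ) G :=
  strong_neighbor_circuit_no_leaf_general Δ n F hinj hcirc
end

section
/- Let Δ be a facet complex and F, G ∈ Δ. If F is a leaf of Δ \ {G} but not a leaf of Δ, then F and G are strong neighbors in Δ. -/
variable {V : Type*} [DecidableEq V]

open Finset

/-- The joint `J` witnessing that `F` is a leaf of `Δ.erase G` also absorbs `G`, because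
`G ∩ F ⊆ H ∩ F ⊆ J ∩ F`; so it still witnesses that `F` is a leaf of `Δ`. -/
theorem IsLeaf.of_erase_of_inter_subset {Δ : Finset (Finset V)} {F G H : Finset V}
    (hF : IsLeaf (Δ.erase G) F) (hH : H ∈ Δ.erase G) (hHF : H ≠ F) (hGH : G ∩ F ⊆ H ∩ F) :
    IsLeaf Δ F := by
  obtain ⟨hFΔ, hsingle | ⟨J, hJ, hJF⟩⟩ := hF
  · exact absurd (by simpa [hsingle] using hH) hHF
  refine ⟨mem_of_mem_erase hFΔ, Or.inr ⟨J, erase_subset_erase F (erase_subset G Δ) hJ, ?_⟩⟩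
  intro K hK
  by_cases hKG : K = G
  · subst hKG
    exact hGH.trans (hJF H (mem_erase.2 ⟨hHF, hH⟩))
  · exact hJF K (by rw [erase_right_comm]; exact mem_erase.2 ⟨hKG, hK⟩)

theorem leaf_of_erase_strong_neighbor_general (Δ : Finset (Finset V))
    (F G : Finset V) (hG : G ∈ Δ)
    (h1 : IsLeaf (Δ.erase G) F) (h2 : ¬ IsLeaf Δ F) :
    StrongNeighbor Δ F G := by
  obtain ⟨hFG, hF⟩ := mem_erase.1 h1.1
  refine ⟨hF, hG, hFG, fun H hH hFGH => ?_⟩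
  by_contra! ⟨hHF, hHG⟩
  exact h2 (h1.of_erase_of_inter_subset (mem_erase.2 ⟨hHG, hH⟩) hHF
    (subset_inter (inter_comm G F ▸ hFGH) inter_subset_right))

theorem leaf_of_erase_strong_neighbor (Δ : Finset (Finset V))
    (hΔ : IsFacetComplex Δ) (F G : Finset V) (hF : F ∈ Δ) (hG : G ∈ Δ)
    (h1 : IsLeaf (Δ.erase G) F) (h2 : ¬ IsLeaf Δ F) :
    StrongNeighbor Δ F G :=
  leaf_of_erase_strong_neighbor_general Δ F G hG h1 h2
end

section
/- If Δ is a cycle enumerated as F₁ ∼_Δ F₂ ∼_Δ ⋯ ∼_Δ Fₙ ∼_Δ F₁, then for each i, the facet complex Δ \ {Fᵢ} is a tree whose only leaves are F_{i−1} and F_{i+1} (indices mod n). -/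
variable {V : Type*} [DecidableEq V]

section CycleAux

open Fin.NatCast Fin.CommRing

variable {n : ℕ}

private lemma fin_cast_ne {a b : ℕ} (ha : a < n + 3) (hb : b < n + 3) (hab : a ≠ b) :
    (a : Fin (n + 3)) ≠ (b : Fin (n + 3)) := by
  intro h
  apply hab
  have h2 := congrArg Fin.val h
  rwa [Fin.val_cast_of_lt ha, Fin.val_cast_of_lt hb] at h2

private lemma shift_ne (i : Fin (n + 3)) {a b : ℕ} (ha : a < n + 3) (hb : b < n + 3)
    (hab : a ≠ b) : i + (a : Fin (n + 3)) ≠ i + (b : Fin (n + 3)) :=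
  fun h => fin_cast_ne ha hb hab (add_left_cancel h)

private lemma cast_n2 : ((n + 2 : ℕ) : Fin (n + 3)) = -1 := by
  have h : ((n + 3 : ℕ) : Fin (n + 3)) = 0 := Fin.natCast_self _
  push_cast at h ⊢
  linear_combination h

private lemma cast_n1 : ((n + 1 : ℕ) : Fin (n + 3)) = -2 := by
  have h : ((n + 3 : ℕ) : Fin (n + 3)) = 0 := Fin.natCast_self _
  push_cast at h ⊢
  linear_combination h

variable {Δ : Finset (Finset V)} {F : Fin (n + 3) → Finset V}

private lemma memF (henum : Finset.image F Finset.univ = Δ) (i : Fin (n + 3)) : F i ∈ Δ :=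
  henum ▸ Finset.mem_image_of_mem F (Finset.mem_univ i)

private lemma exF (henum : Finset.image F Finset.univ = Δ) {G : Finset V} (hG : G ∈ Δ) :
    ∃ j, G = F j := by
  rw [← henum] at hG
  simp only [Finset.mem_image, Finset.mem_univ, true_and] at hG
  obtain ⟨j, hj⟩ := hG
  exact ⟨j, hj.symm⟩

private lemma sn_symm {A B : Finset V} (h : StrongNeighbor Δ A B) : StrongNeighbor Δ B A :=
  ⟨h.2.1, h.1, h.2.2.1.symm, fun H hH hsub =>
    (h.2.2.2 H hH (by rwa [Finset.inter_comm])).symm⟩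

/-- If `F m` is a leaf of `Γ ⊆ Δ` and a strong neighbor `Fk` of `F m` (in `Δ`) belongs to
`Γ`, then the joint of `F m` must be `Fk`. -/
private lemma joint_forced {Γ : Finset (Finset V)} {Fm Fk : Finset V}
    (hΓ : Γ ⊆ Δ) (hleaf : IsLeaf Γ Fm) (hk : Fk ∈ Γ) (hkm : Fk ≠ Fm)
    (hsn : StrongNeighbor Δ Fk Fm) :
    ∀ H ∈ Γ.erase Fm, H ∩ Fm ⊆ Fk ∩ Fm := by
  obtain ⟨hmem, hcase⟩ := hleaf
  rcases hcase with h1 | ⟨G, hG, hjoint⟩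
  · rw [h1, Finset.mem_singleton] at hk
    exact absurd hk hkm
  · have hGΔ : G ∈ Δ := hΓ (Finset.mem_of_mem_erase hG)
    have hsub : Fk ∩ Fm ⊆ G :=
      (hjoint Fk (Finset.mem_erase.mpr ⟨hkm, hk⟩)).trans Finset.inter_subset_left
    rcases hsn.2.2.2 G hGΔ hsub with h | h
    · subst h; exact hjoint
    · exact absurd h (Finset.ne_of_mem_erase hG)

/-- The key arc lemma: the intersection of the two endpoints of a proper arc of the cycle
is contained in every facet of the arc. -/
private lemma arcLemma (hcyc : IsCycle Δ) (hinj : Function.Injective F)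
    (henum : Finset.image F Finset.univ = Δ)
    (hcirc : ∀ i : Fin (n + 3), StrongNeighbor Δ (F i) (F (i + 1))) :
    ∀ d : ℕ, 2 ≤ d → d ≤ n + 1 → ∀ i : Fin (n + 3), ∀ t : ℕ, t ≤ d →
      F i ∩ F (i + (d : Fin (n + 3))) ⊆ F (i + (t : Fin (n + 3))) := by
  intro d
  induction d using Nat.strong_induction_on with
  | _ d IH =>
  intro h2d hdn i t ht
  -- the arc
  set Γ : Finset (Finset V) :=
    (Finset.range (d + 1)).image (fun s : ℕ => F (i + (s : Fin (n + 3)))) with hΓdef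
  have hmemΓ : ∀ s : ℕ, s ≤ d → F (i + (s : Fin (n + 3))) ∈ Γ := by
    intro s hs
    exact Finset.mem_image_of_mem _ (Finset.mem_range.mpr (by omega))
  have hΓsub : Γ ⊆ Δ := by
    intro H hH
    simp only [hΓdef, Finset.mem_image, Finset.mem_range] at hH
    obtain ⟨s, _, hs⟩ := hH
    exact hs ▸ memF henum _
  have hproper : Γ ⊂ Δ := by
    refine Finset.ssubset_iff_of_subset hΓsub |>.mpr ⟨F (i + ((d + 1 : ℕ) : Fin (n + 3))),
      memF henum _, ?_⟩
    intro hmem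
    simp only [hΓdef, Finset.mem_image, Finset.mem_range] at hmem
    obtain ⟨s, hsr, hs⟩ := hmem
    have := hinj hs
    have := add_left_cancel this
    exact fin_cast_ne (by omega) (by omega) (by omega) this
  obtain ⟨L, hLleaf⟩ := hcyc.2.2 Γ hproper ⟨F (i + ((0 : ℕ) : Fin (n + 3))), hmemΓ 0 (by omega)⟩
  have hLΓ : L ∈ Γ := hLleaf.1
  simp only [hΓdef, Finset.mem_image, Finset.mem_range] at hLΓ
  obtain ⟨s, hsr, hsL⟩ := hLΓ
  have hs : s ≤ d := by omega
  subst hsL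
  -- case analysis on s
  rcases Nat.lt_or_ge s d with hsd | hsd
  · rcases Nat.eq_zero_or_pos s with hs0 | hs0
    · -- s = 0 : left endpoint
      subst hs0
      -- joint forced to be F (i + 1)
      have hsn : StrongNeighbor Δ (F (i + ((1 : ℕ) : Fin (n + 3)))) (F (i + ((0 : ℕ) : Fin (n + 3)))) := by
        have := sn_symm (hcirc i)
        have e1 : i + ((1 : ℕ) : Fin (n + 3)) = i + 1 := by push_cast; ring
        have e0 : i + ((0 : ℕ) : Fin (n + 3)) = i := by push_cast; ring
        rw [e1, e0]
        exact this
      have hJ := joint_forced hΓsub hLleaf (hmemΓ 1 (by omega))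
        (fun h => fin_cast_ne (by omega) (by omega) (by omega) (add_left_cancel (hinj h))) hsn
      have hH : F (i + ((d : ℕ) : Fin (n + 3))) ∈ Γ.erase (F (i + ((0 : ℕ) : Fin (n + 3)))) :=
        Finset.mem_erase.mpr ⟨fun h => fin_cast_ne (by omega) (by omega) (by omega)
          (add_left_cancel (hinj h)), hmemΓ d le_rfl⟩
      have hA1 : F i ∩ F (i + (d : Fin (n + 3))) ⊆ F (i + ((1 : ℕ) : Fin (n + 3))) := by
        have e0 : i + ((0 : ℕ) : Fin (n + 3)) = i := by push_cast; ring
        intro x hx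
        have := hJ _ hH (by rw [e0, Finset.inter_comm]; exact hx)
        exact (Finset.mem_inter.mp this).1
      -- now recurse on arc from i+1 of length d-1, or finish if d = 2
      obtain ⟨e, rfl⟩ : ∃ e, d = e + 2 := ⟨d - 2, by omega⟩
      have key : F i ∩ F (i + ((e + 2 : ℕ) : Fin (n + 3))) ⊆
          F (i + ((1 : ℕ) : Fin (n + 3))) ∩ F ((i + ((1 : ℕ) : Fin (n + 3))) + ((e + 1 : ℕ) : Fin (n + 3))) := by
        intro x hx
        refine Finset.mem_inter.mpr ⟨hA1 hx, ?_⟩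
        have e2 : (i + ((1 : ℕ) : Fin (n + 3))) + ((e + 1 : ℕ) : Fin (n + 3))
            = i + ((e + 2 : ℕ) : Fin (n + 3)) := by push_cast; ring
        rw [e2]
        exact (Finset.mem_inter.mp hx).2
      rcases Nat.eq_zero_or_pos e with he0 | he0
      · subst he0
        -- d = 2, targets t = 0, 1, 2
        interval_cases t
        · exact Finset.inter_subset_left.trans (by
            have e0 : i + ((0 : ℕ) : Fin (n + 3)) = i := by push_cast; ring
            rw [e0])
        · exact hA1
        · exact Finset.inter_subset_right
      · -- e ≥ 1 : IH applies with d' = e + 1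
        rcases Nat.lt_or_ge t (e + 2) with htlt | htge
        · have := IH (e + 1) (by omega) (by omega) (by omega) (i + ((1 : ℕ) : Fin (n + 3)))
            (t - 1)  (by omega)
          rcases Nat.eq_zero_or_pos t with ht0 | ht0
          · subst ht0
            exact Finset.inter_subset_left.trans (by
              have e0 : i + ((0 : ℕ) : Fin (n + 3)) = i := by push_cast; ring
              rw [e0])
          · have e3 : (i + ((1 : ℕ) : Fin (n + 3))) + ((t - 1 : ℕ) : Fin (n + 3))
                = i + ((t : ℕ) : Fin (n + 3)) := by
              obtain ⟨t', rfl⟩ : ∃ t', t = t' + 1 := ⟨t - 1, by omega⟩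
              simp only [Nat.add_sub_cancel]
              push_cast
              ring
            rw [← e3]
            exact key.trans this
        · have htd : t = e + 2 := by omega
          subst htd
          exact Finset.inter_subset_right
    · -- 0 < s < d : interior, contradiction
      exfalso
      obtain ⟨s', rfl⟩ : ∃ s', s = s' + 1 := ⟨s - 1, by omega⟩
      -- joint forced to be F (i + s')
      have hsn : StrongNeighbor Δ (F (i + ((s' : ℕ) : Fin (n + 3)))) (F (i + ((s' + 1 : ℕ) : Fin (n + 3)))) := by
        have := hcirc (i + ((s' : ℕ) : Fin (n + 3)))
        have e1 : (i + ((s' : ℕ) : Fin (n + 3))) + 1 = i + ((s' + 1 : ℕ) : Fin (n + 3)) := by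
          push_cast; ring
        rwa [e1] at this
      have hJ := joint_forced hΓsub hLleaf (hmemΓ s' (by omega))
        (fun h => fin_cast_ne (by omega) (by omega) (by omega) (add_left_cancel (hinj h))) hsn
      have hH : F (i + ((s' + 2 : ℕ) : Fin (n + 3))) ∈ Γ.erase (F (i + ((s' + 1 : ℕ) : Fin (n + 3)))) :=
        Finset.mem_erase.mpr ⟨fun h => fin_cast_ne (by omega) (by omega) (by omega)
          (add_left_cancel (hinj h)), hmemΓ (s' + 2) (by omega)⟩
      have hsub : F (i + ((s' + 1 : ℕ) : Fin (n + 3))) ∩ F (i + ((s' + 2 : ℕ) : Fin (n + 3)))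
          ⊆ F (i + ((s' : ℕ) : Fin (n + 3))) := by
        intro x hx
        have := hJ _ hH (by rw [Finset.inter_comm]; exact hx)
        exact (Finset.mem_inter.mp this).1
      -- violates strong neighborhood of consecutive facets
      have hsn2 : StrongNeighbor Δ (F (i + ((s' + 1 : ℕ) : Fin (n + 3)))) (F (i + ((s' + 2 : ℕ) : Fin (n + 3)))) := by
        have := hcirc (i + ((s' + 1 : ℕ) : Fin (n + 3)))
        have e1 : (i + ((s' + 1 : ℕ) : Fin (n + 3))) + 1 = i + ((s' + 2 : ℕ) : Fin (n + 3)) := by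
          push_cast; ring
        rwa [e1] at this
      rcases hsn2.2.2.2 _ (memF henum _) hsub with h | h
      · exact fin_cast_ne (n := n) (by omega) (by omega) (by omega) (add_left_cancel (hinj h))
      · exact fin_cast_ne (n := n) (by omega) (by omega) (by omega) (add_left_cancel (hinj h))
  · -- s = d : right endpoint
    have hsd' : s = d := by omega
    subst hsd'
    obtain ⟨e, rfl⟩ : ∃ e, s = e + 2 := ⟨s - 2, by omega⟩
    -- joint forced to be F (i + (e+1))
    have hsn : StrongNeighbor Δ (F (i + ((e + 1 : ℕ) : Fin (n + 3)))) (F (i + ((e + 2 : ℕ) : Fin (n + 3)))) := by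
      have := hcirc (i + ((e + 1 : ℕ) : Fin (n + 3)))
      have e1 : (i + ((e + 1 : ℕ) : Fin (n + 3))) + 1 = i + ((e + 2 : ℕ) : Fin (n + 3)) := by
        push_cast; ring
      rwa [e1] at this
    have hJ := joint_forced hΓsub hLleaf (hmemΓ (e + 1) (by omega))
      (fun h => fin_cast_ne (by omega) (by omega) (by omega) (add_left_cancel (hinj h))) hsn
    have hH : F (i + ((0 : ℕ) : Fin (n + 3))) ∈ Γ.erase (F (i + ((e + 2 : ℕ) : Fin (n + 3)))) :=
      Finset.mem_erase.mpr ⟨fun h => fin_cast_ne (by omega) (by omega) (by omega)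
        (add_left_cancel (hinj h)), hmemΓ 0 (by omega)⟩
    have hA1 : F i ∩ F (i + ((e + 2 : ℕ) : Fin (n + 3))) ⊆ F (i + ((e + 1 : ℕ) : Fin (n + 3))) := by
      have e0 : i + ((0 : ℕ) : Fin (n + 3)) = i := by push_cast; ring
      intro x hx
      have := hJ _ hH (by rw [e0]; exact hx)
      exact (Finset.mem_inter.mp this).1
    rcases Nat.eq_zero_or_pos e with he0 | he0
    · subst he0
      interval_cases t
      · exact Finset.inter_subset_left.trans (by
          have e0 : i + ((0 : ℕ) : Fin (n + 3)) = i := by push_cast; ring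
          rw [e0])
      · exact hA1
      · exact Finset.inter_subset_right
    · rcases Nat.lt_or_ge t (e + 2) with htlt | htge
      · have hrec := IH (e + 1) (by omega) (by omega) (by omega) i t (by omega)
        intro x hx
        exact hrec (Finset.mem_inter.mpr ⟨(Finset.mem_inter.mp hx).1, hA1 hx⟩)
      · have htd : t = e + 2 := by omega
        subst htd
        exact Finset.inter_subset_right

/-- nonadjacent facets of the cycle intersect inside every facet. -/
private lemma lemA (hcyc : IsCycle Δ) (hinj : Function.Injective F)
    (henum : Finset.image F Finset.univ = Δ)
    (hcirc : ∀ i : Fin (n + 3), StrongNeighbor Δ (F i) (F (i + 1)))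
    {i j : Fin (n + 3)} (h0 : j ≠ i) (h1 : j ≠ i + 1) (h2 : j ≠ i - 1) (k : Fin (n + 3)) :
    F i ∩ F j ⊆ F k := by
  set d : ℕ := (j - i).val with hd
  set t : ℕ := (k - i).val with htdef
  have hdlt : d < n + 3 := (j - i).isLt
  have htlt : t < n + 3 := (k - i).isLt
  have hj : j = i + ((d : ℕ) : Fin (n + 3)) := by
    rw [hd, Fin.cast_val_eq_self]; ring
  have hk : k = i + ((t : ℕ) : Fin (n + 3)) := by
    rw [htdef, Fin.cast_val_eq_self]; ring
  have hd0 : d ≠ 0 := by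
    intro h
    apply h0
    rw [hj, h]; push_cast; ring
  have hd1 : d ≠ 1 := by
    intro h
    apply h1
    rw [hj, h]; push_cast; ring
  have hd2 : d ≠ n + 2 := by
    intro h
    apply h2
    rw [hj, h, cast_n2]; ring
  rcases le_or_gt t d with htle | htgt
  · rw [hj, hk]
    exact arcLemma hcyc hinj henum hcirc d (by omega) (by omega) i t htle
  · -- use the complementary arc from j
    have hd' : (2 : ℕ) ≤ n + 3 - d := by omega
    have hsum : ((d : ℕ) : Fin (n + 3)) + ((n + 3 - d : ℕ) : Fin (n + 3)) = 0 := by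
      rw [← Nat.cast_add]
      have h3 : d + (n + 3 - d) = n + 3 := by omega
      rw [h3]
      exact Fin.natCast_self _
    have hi' : i = j + ((n + 3 - d : ℕ) : Fin (n + 3)) := by
      rw [hj, add_assoc, hsum, add_zero]
    have hk' : k = j + ((t - d : ℕ) : Fin (n + 3)) := by
      rw [hk, hj]
      have : ((t : ℕ) : Fin (n + 3)) = ((d : ℕ) : Fin (n + 3)) + ((t - d : ℕ) : Fin (n + 3)) := by
        rw [← Nat.cast_add]
        congr 1
        omega
      linear_combination this
    have := arcLemma hcyc hinj henum hcirc (n + 3 - d) (by omega) (by omega) j (t - d) (by omega)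
    rw [← hi', ← hk'] at this
    exact (Finset.inter_comm (F i) (F j)) ▸ this

end CycleAux

theorem cycle_minus_facet_is_tree (Δ : Finset (Finset V))
    (hΔ : IsFacetComplex Δ) (hcyc : IsCycle Δ) (n : ℕ)
    (F : Fin (n + 3) → Finset V) (hinj : Function.Injective F)
    (henum : Finset.image F Finset.univ = Δ)
    (hcirc : ∀ i : Fin (n + 3), StrongNeighbor Δ (F i) (F (i + 1))) :
    ∀ i : Fin (n + 3), IsTree (Δ.erase (F i)) ∧
      (∀ G, IsLeaf (Δ.erase (F i)) G ↔ G = F (i - 1) ∨ G = F (i + 1)) := by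
  open Fin.NatCast Fin.CommRing in
  intro i
  have hsub : Δ.erase (F i) ⊆ Δ := Finset.erase_subset _ _
  -- the forest property
  have hforest : IsForest (Δ.erase (F i)) := by
    intro Γ hΓ hne
    refine hcyc.2.2 Γ ?_ hne
    refine (Finset.ssubset_iff_of_subset (hΓ.trans hsub)).mpr ⟨F i, memF henum i, fun h => ?_⟩
    exact (Finset.mem_erase.mp (hΓ h)).1 rfl
  -- membership of shifted facets in the erased complex
  have hmemE : ∀ s : ℕ, 1 ≤ s → s ≤ n + 2 → F (i + ((s : ℕ) : Fin (n + 3))) ∈ Δ.erase (F i) := by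
    intro s h1 h2
    refine Finset.mem_erase.mpr ⟨fun h => ?_, memF henum _⟩
    have h3 : i + ((s : ℕ) : Fin (n + 3)) = i := hinj h
    exact fin_cast_ne (n := n) (a := s) (b := 0) (by omega) (by omega) (by omega)
      (by push_cast; linear_combination h3)
  -- consecutive facets intersect
  have sn_ne : ∀ m : Fin (n + 3), (F m ∩ F (m + 1)).Nonempty := by
    intro m
    rw [Finset.nonempty_iff_ne_empty]
    intro h
    rcases (hcirc m).2.2.2 (F (m + 1 + 1)) (memF henum _)
        (by rw [h]; exact Finset.empty_subset _) with h3 | h3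
    · exact fin_cast_ne (n := n) (a := 2) (b := 0) (by omega) (by omega) (by omega)
        (by push_cast; linear_combination hinj h3)
    · exact fin_cast_ne (n := n) (a := 1) (b := 0) (by omega) (by omega) (by omega)
        (by push_cast; linear_combination hinj h3)
  -- connectivity via paths to F (i+1)
  have path : ∀ t : ℕ, t ≤ n + 1 →
      Relation.ReflTransGen
        (fun A B => A ∈ Δ.erase (F i) ∧ B ∈ Δ.erase (F i) ∧ (A ∩ B).Nonempty)
        (F (i + 1 + ((t : ℕ) : Fin (n + 3)))) (F (i + 1)) := by
    intro t
    induction t with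
    | zero =>
      intro _
      have e : i + 1 + ((0 : ℕ) : Fin (n + 3)) = i + 1 := by push_cast; ring
      rw [e]
    | succ t IHt =>
      intro ht
      refine Relation.ReflTransGen.head ⟨?_, ?_, ?_⟩ (IHt (by omega))
      · have e : i + 1 + ((t + 1 : ℕ) : Fin (n + 3)) = i + ((t + 2 : ℕ) : Fin (n + 3)) := by
          push_cast; ring
        rw [e]; exact hmemE (t + 2) (by omega) (by omega)
      · have e : i + 1 + ((t : ℕ) : Fin (n + 3)) = i + ((t + 1 : ℕ) : Fin (n + 3)) := by
          push_cast; ring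
        rw [e]; exact hmemE (t + 1) (by omega) (by omega)
      · have e : i + 1 + ((t + 1 : ℕ) : Fin (n + 3)) = (i + 1 + ((t : ℕ) : Fin (n + 3))) + 1 := by
          push_cast; ring
        rw [e, Finset.inter_comm]
        exact sn_ne _
  have hconn : FCConnected (Δ.erase (F i)) := by
    intro A hA B hB
    have hsymm : Symmetric
        (fun A B : Finset V => A ∈ Δ.erase (F i) ∧ B ∈ Δ.erase (F i) ∧ (A ∩ B).Nonempty) :=
      fun X Y h => ⟨h.2.1, h.1, by rw [Finset.inter_comm]; exact h.2.2⟩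
    obtain ⟨a, rfl⟩ := exF henum (hsub hA)
    obtain ⟨b, rfl⟩ := exF henum (hsub hB)
    have key : ∀ c : Fin (n + 3), F c ∈ Δ.erase (F i) →
        Relation.ReflTransGen
          (fun A B => A ∈ Δ.erase (F i) ∧ B ∈ Δ.erase (F i) ∧ (A ∩ B).Nonempty)
          (F c) (F (i + 1)) := by
      intro c hc
      have hci : c ≠ i := fun h => (Finset.mem_erase.mp hc).1 (by rw [h])
      have htc : (c - (i + 1)).val ≤ n + 1 := by
        by_contra hcon
        have hval : (c - (i + 1)).val = n + 2 := by have := (c - (i + 1)).isLt; omega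
        apply hci
        have h4 : c - (i + 1) = ((n + 2 : ℕ) : Fin (n + 3)) :=
          Fin.ext (by rw [hval, Fin.val_cast_of_lt (by omega)])
        rw [cast_n2] at h4
        linear_combination h4
      have ec : F c = F (i + 1 + (((c - (i + 1)).val : ℕ) : Fin (n + 3))) := by
        rw [Fin.cast_val_eq_self]; congr 1; ring
      rw [ec]
      exact path _ htc
    exact (key a hA).trans (by letI := Std.Symm.mk hsymm; exact Std.Symm.symm _ _ (key b hB))
  -- F (i+1) is a leaf
  have leaf_next : IsLeaf (Δ.erase (F i)) (F (i + 1)) := by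
    refine ⟨Finset.mem_erase.mpr ⟨fun h => fin_cast_ne (n := n) (a := 1) (b := 0)
      (by omega) (by omega) (by omega) (by push_cast; linear_combination hinj h),
      memF henum _⟩, Or.inr ⟨F (i + 1 + 1), ?_, ?_⟩⟩
    · refine Finset.mem_erase.mpr ⟨fun h => fin_cast_ne (n := n) (a := 1) (b := 0)
        (by omega) (by omega) (by omega) (by push_cast; linear_combination hinj h),
        Finset.mem_erase.mpr ⟨fun h => fin_cast_ne (n := n) (a := 2) (b := 0)
        (by omega) (by omega) (by omega) (by push_cast; linear_combination hinj h),
        memF henum _⟩⟩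
    · intro H hH
      obtain ⟨m, rfl⟩ := exF henum (hsub (Finset.mem_of_mem_erase hH))
      by_cases hm2 : F m = F (i + 1 + 1)
      · rw [hm2]
      · have hmne1 : m ≠ i + 1 := fun h => (Finset.mem_erase.mp hH).1 (by rw [h])
        have hmnei : m ≠ i := fun h =>
          (Finset.mem_erase.mp (Finset.mem_of_mem_erase hH)).1 (by rw [h])
        have hmne2 : m ≠ i + 1 + 1 := fun h => hm2 (by rw [h])
        have hstep := lemA hcyc hinj henum hcirc (i := i + 1) (j := m) hmne1 hmne2
          (by rw [show (i + 1 - 1 : Fin (n + 3)) = i from by ring]; exact hmnei) (i + 1 + 1)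
        intro x hx
        have hx' := Finset.mem_inter.mp hx
        exact Finset.mem_inter.mpr ⟨hstep (Finset.mem_inter.mpr ⟨hx'.2, hx'.1⟩), hx'.2⟩
  -- F (i-1) is a leaf
  have leaf_prev : IsLeaf (Δ.erase (F i)) (F (i - 1)) := by
    refine ⟨Finset.mem_erase.mpr ⟨fun h => fin_cast_ne (n := n) (a := 1) (b := 0)
      (by omega) (by omega) (by omega) (by push_cast; linear_combination -hinj h),
      memF henum _⟩, Or.inr ⟨F (i - 1 - 1), ?_, ?_⟩⟩
    · refine Finset.mem_erase.mpr ⟨fun h => fin_cast_ne (n := n) (a := 1) (b := 0)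
        (by omega) (by omega) (by omega) (by push_cast; linear_combination -hinj h),
        Finset.mem_erase.mpr ⟨fun h => fin_cast_ne (n := n) (a := 2) (b := 0)
        (by omega) (by omega) (by omega) (by push_cast; linear_combination -hinj h),
        memF henum _⟩⟩
    · intro H hH
      obtain ⟨m, rfl⟩ := exF henum (hsub (Finset.mem_of_mem_erase hH))
      by_cases hm2 : F m = F (i - 1 - 1)
      · rw [hm2]
      · have hmne1 : m ≠ i - 1 := fun h => (Finset.mem_erase.mp hH).1 (by rw [h])
        have hmnei : m ≠ i := fun h =>
          (Finset.mem_erase.mp (Finset.mem_of_mem_erase hH)).1 (by rw [h])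
        have hmne2 : m ≠ i - 1 - 1 := fun h => hm2 (by rw [h])
        have hstep := lemA hcyc hinj henum hcirc (i := i - 1) (j := m) hmne1
          (by rw [show (i - 1 + 1 : Fin (n + 3)) = i from by ring]; exact hmnei)
          hmne2 (i - 1 - 1)
        intro x hx
        have hx' := Finset.mem_inter.mp hx
        exact Finset.mem_inter.mpr ⟨hstep (Finset.mem_inter.mpr ⟨hx'.2, hx'.1⟩), hx'.2⟩
  refine ⟨⟨hconn, hforest⟩, fun G => ⟨?_, ?_⟩⟩
  · -- forward: any leaf is F (i-1) or F (i+1)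
    intro hGleaf
    obtain ⟨m, rfl⟩ := exF henum (hsub hGleaf.1)
    by_contra hcon
    push_neg at hcon
    obtain ⟨hc1, hc2⟩ := hcon
    have hm1 : m ≠ i - 1 := fun h => hc1 (by rw [h])
    have hm2 : m ≠ i + 1 := fun h => hc2 (by rw [h])
    have hnext : F (m + 1) ∈ Δ.erase (F i) :=
      Finset.mem_erase.mpr ⟨fun h => hm1 (by linear_combination hinj h), memF henum _⟩
    have hJ := joint_forced hsub hGleaf hnext
      (fun h => fin_cast_ne (n := n) (a := 1) (b := 0) (by omega) (by omega) (by omega)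
        (by push_cast; linear_combination hinj h))
      (sn_symm (hcirc m))
    have hprev : F (m - 1) ∈ (Δ.erase (F i)).erase (F m) := by
      refine Finset.mem_erase.mpr ⟨fun h => fin_cast_ne (n := n) (a := 1) (b := 0)
        (by omega) (by omega) (by omega) (by push_cast; linear_combination -hinj h),
        Finset.mem_erase.mpr ⟨fun h => hm2 (by linear_combination hinj h), memF henum _⟩⟩
    have hsub2 : F (m - 1) ∩ F m ⊆ F (m + 1) :=
      (hJ _ hprev).trans Finset.inter_subset_left
    have hsn := hcirc (m - 1)
    rw [show (m - 1 + 1 : Fin (n + 3)) = m from by ring] at hsn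
    rcases hsn.2.2.2 _ (memF henum _) hsub2 with h | h
    · exact fin_cast_ne (n := n) (a := 2) (b := 0) (by omega) (by omega) (by omega)
        (by push_cast; linear_combination hinj h)
    · exact fin_cast_ne (n := n) (a := 1) (b := 0) (by omega) (by omega) (by omega)
        (by push_cast; linear_combination hinj h)
  · rintro (rfl | rfl)
    · exact leaf_prev
    · exact leaf_next
end

section
/- Let Δ be a cycle and F ≠ G facets of Δ that are not strong neighbors. Then F ∩ G ⊆ H for every facet H ∈ Δ. -/
variable {V : Type*} [DecidableEq V]

/-!
It suffices to show that a set `A` lying in three facets of a cycle `Δ` lies in every facet: for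
`A = F ∩ G` the third facet is the witness that `F` and `G` are not strong neighbors. We induct on
the number of facets and suppose `A ⊄ W`. Two facets containing `A` have comparable traces on `W`,
because the subcomplex they form with `W` has a leaf; so if `W` were the only facet missing `A`, it
would be a leaf of `Δ`. Otherwise pick another facet `W'` missing `A`. The forest `Δ \ {W}` has two
leaves, and a leaf `R ≠ W'` is a strong neighbor of `W`, since otherwise it would be a leaf of `Δ`.
Merging `W` and `R` into `W ∪ R` gives a smaller cycle in which `A` still lies in three facets but
not in `W'`. That merging strong neighbors preserves cycles rests on the same observation: the traces
of two strong neighbors on any third facet are comparable, so their union has the trace of one of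
them.
-/

open Finset

variable {Δ Γ Γ' Ψ S : Finset (Finset V)} {A H L K K' M X Y Z P W R : Finset V}

theorem inter_subset_inter_swap (h : X ∩ Y ⊆ Z ∩ Y) : Y ∩ X ⊆ Z ∩ X := fun x hx => by
  obtain ⟨hxY, hxX⟩ := mem_inter.1 hx
  exact mem_inter.2 ⟨mem_of_mem_inter_left (h (mem_inter.2 ⟨hxX, hxY⟩)), hxX⟩

def IsJoint (Γ : Finset (Finset V)) (L K : Finset V) : Prop :=
  K ∈ Γ.erase L ∧ ∀ H ∈ Γ.erase L, H ∩ L ⊆ K ∩ L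

theorem IsJoint.isLeaf (hK : IsJoint Γ L K) (hL : L ∈ Γ) : IsLeaf Γ L :=
  ⟨hL, .inr ⟨K, hK⟩⟩

theorem IsLeaf.exists_isJoint (hL : IsLeaf Γ L) (hM : M ∈ Γ) (hML : M ≠ L) :
    ∃ K, IsJoint Γ L K := by
  rcases hL.2 with rfl | h
  · exact absurd (mem_singleton.1 hM) hML
  · exact h

theorem IsJoint.of_dominated (hK : IsJoint Γ L K) (hK' : K' ∈ Γ'.erase L)
    (hKK' : K ∩ L ⊆ K' ∩ L) (hdom : ∀ H ∈ Γ'.erase L, ∃ H' ∈ Γ.erase L, H ∩ L ⊆ H' ∩ L) :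
    IsJoint Γ' L K' := by
  refine ⟨hK', fun H hH => ?_⟩
  obtain ⟨H', hH', hHH'⟩ := hdom H hH
  exact hHH'.trans ((hK.2 H' hH').trans hKK')

theorem exists_isJoint_of_inter_total (hne : (Γ.erase L).Nonempty)
    (htot : ∀ H₁ ∈ Γ.erase L, ∀ H₂ ∈ Γ.erase L, H₁ ∩ L ⊆ H₂ ∩ L ∨ H₂ ∩ L ⊆ H₁ ∩ L) :
    ∃ K, IsJoint Γ L K := by
  obtain ⟨K, hK, hmax⟩ := (Γ.erase L).exists_max_image (fun H => #(H ∩ L)) hne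
  refine ⟨K, hK, fun H hH => ?_⟩
  rcases htot H hH K hK with h | h
  · exact h
  · exact (eq_of_subset_of_card_le h (hmax H hH)).ge

theorem IsForest.mono (hΨ : IsForest Ψ) (hΓ : Γ ⊆ Ψ) : IsForest Γ :=
  fun Γ' hΓ' hne => hΨ Γ' (hΓ'.trans hΓ) hne

theorem IsForest.exists_isLeaf_ne (hΨ : IsForest Ψ) (hcard : 1 < #Ψ) (K : Finset V) :
    ∃ L, IsLeaf Ψ L ∧ L ≠ K := by
  induction hn : #Ψ generalizing Ψ K with
  | zero => omega
  | succ n ih =>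
    obtain ⟨L, hL⟩ := hΨ Ψ subset_rfl (card_pos.1 (by omega))
    by_cases hLK : L = K
    swap
    · exact ⟨L, hL, hLK⟩
    subst hLK
    obtain ⟨M, hM, hML⟩ := exists_mem_ne hcard L
    obtain ⟨J, hJ⟩ := hL.exists_isJoint hM hML
    have hJΨ : J ∈ Ψ := mem_of_mem_erase hJ.1
    have hJL : J ≠ L := ne_of_mem_erase hJ.1
    have hcard' : #(Ψ.erase L) = n := by rw [card_erase_of_mem hL.1]; omega
    by_cases hn1 : n = 1
    · -- here `Ψ = {L, J}`
      refine ⟨J, IsJoint.isLeaf ⟨mem_erase.2 ⟨hJL.symm, hL.1⟩, fun H hH => ?_⟩ hJΨ, hJL⟩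
      by_cases hHL : H = L
      · rw [hHL]
      · have hHJ := card_le_one.1 (by omega) H (mem_erase.2 ⟨hHL, mem_of_mem_erase hH⟩) J hJ.1
        exact absurd hHJ (ne_of_mem_erase hH)
    obtain ⟨N, hN, hNJ⟩ := ih (hΨ.mono (erase_subset _ _)) (by omega) J hcard'
    obtain ⟨J', hJ'⟩ := hN.exists_isJoint (mem_erase.2 ⟨hJL, hJΨ⟩) hNJ.symm
    have hNΨ : N ∈ Ψ.erase L := hN.1
    refine ⟨N, IsJoint.isLeaf (hJ'.of_dominated ?_ subset_rfl fun H hH => ?_)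
      (mem_of_mem_erase hNΨ), ne_of_mem_erase hNΨ⟩
    · exact mem_erase.2 ⟨ne_of_mem_erase hJ'.1, mem_of_mem_erase (mem_of_mem_erase hJ'.1)⟩
    by_cases hHL : H = L
    · subst hHL
      exact ⟨J, mem_erase.2 ⟨hNJ.symm, mem_erase.2 ⟨hJL, hJΨ⟩⟩, inter_subset_inter_swap (hJ.2 N hNΨ)⟩
    · exact ⟨H, mem_erase.2 ⟨ne_of_mem_erase hH, mem_erase.2 ⟨hHL, mem_of_mem_erase hH⟩⟩,
        subset_rfl⟩

theorem IsCycle.isForest_of_ssubset (hΔ : IsCycle Δ) (hΨ : Ψ ⊂ Δ) : IsForest Ψ :=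
  fun Γ hΓ hne => hΔ.2.2 Γ (Finset.ssubset_of_subset_of_ssubset hΓ hΨ) hne

theorem inter_subset_or_of_isLeaf_triple (hL : IsLeaf {X, Y, Z} L) (hXY : X ≠ Y) (hXZ : X ≠ Z)
    (hYZ : Y ≠ Z) (h : ¬ X ∩ Y ⊆ Z) : X ∩ Z ⊆ Y ∩ Z ∨ Y ∩ Z ⊆ X ∩ Z := by
  have hT : ∀ H, H ∈ ({X, Y, Z} : Finset (Finset V)) ↔ H = X ∨ H = Y ∨ H = Z := by simp
  have hLT := (hT L).1 hL.1
  obtain ⟨M, hM, hML⟩ : ∃ M ∈ ({X, Y, Z} : Finset (Finset V)), M ≠ L := by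
    rcases hLT with rfl | rfl | rfl
    exacts [⟨Y, by simp, hXY.symm⟩, ⟨X, by simp, hXY⟩, ⟨X, by simp, hXZ⟩]
  obtain ⟨K, hKmem, hK⟩ := hL.exists_isJoint hM hML
  have hcov : ∀ H, H ≠ L → (H = X ∨ H = Y ∨ H = Z) → H ∩ L ⊆ K ∩ L :=
    fun H hHL hH => hK H (mem_erase.2 ⟨hHL, (hT H).2 hH⟩)
  obtain ⟨hKL, hK⟩ := mem_erase.1 hKmem
  have hXY' : ¬ Y ∩ X ⊆ Z := by rwa [inter_comm]
  rcases hLT with rfl | rfl | rfl <;> rcases (hT K).1 hK with rfl | rfl | rfl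
  · exact absurd rfl hKL
  · exact .inl (inter_subset_inter_swap (hcov Z hXZ.symm (by simp)))
  · exact absurd ((inter_subset_inter_swap (hcov Y hXY.symm (by simp))).trans inter_subset_left) h
  · exact .inr (inter_subset_inter_swap (hcov Z hYZ.symm (by simp)))
  · exact absurd rfl hKL
  · exact absurd ((inter_subset_inter_swap (hcov X hXY (by simp))).trans inter_subset_left) hXY'
  · exact .inr (hcov Y hYZ (by simp))
  · exact .inl (hcov X hXZ (by simp))
  · exact absurd rfl hKL

theorem IsCycle.inter_subset_or_inter_subset (hΔ : IsCycle Δ) (h4 : 4 ≤ #Δ) (hX : X ∈ Δ)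
    (hY : Y ∈ Δ) (hZ : Z ∈ Δ) (hXY : X ≠ Y) (hXZ : X ≠ Z) (hYZ : Y ≠ Z) (h : ¬ X ∩ Y ⊆ Z) :
    X ∩ Z ⊆ Y ∩ Z ∨ Y ∩ Z ⊆ X ∩ Z := by
  have hT : {X, Y, Z} ⊂ Δ := by
    refine (ssubset_iff_subset_ne).2 ⟨by simp [insert_subset_iff, hX, hY, hZ], fun hT => ?_⟩
    have := card_le_three (a := X) (b := Y) (c := Z)
    rw [hT] at this; omega
  obtain ⟨L, hL⟩ := hΔ.2.2 _ hT (insert_nonempty _ _)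
  exact inter_subset_or_of_isLeaf_triple hL hXY hXZ hYZ h

theorem strongNeighbor_of_isLeaf_erase (hΔ : ¬ ∃ F, IsLeaf Δ F) (hW : W ∈ Δ)
    (hR : IsLeaf (Δ.erase W) R) (hM : M ∈ Δ.erase W) (hMR : M ≠ R) : StrongNeighbor Δ W R := by
  obtain ⟨Q, hQ⟩ := hR.exists_isJoint hM hMR
  have hRW : R ≠ W := ne_of_mem_erase hR.1
  have hRΔ : R ∈ Δ := mem_of_mem_erase hR.1
  refine ⟨hW, hRΔ, hRW.symm, fun U hU hWR => ?_⟩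
  by_contra! hUWR
  refine hΔ ⟨R, (hQ.of_dominated ?_ subset_rfl ?_).isLeaf hRΔ⟩
  · exact mem_erase.2 ⟨ne_of_mem_erase hQ.1, mem_of_mem_erase (mem_of_mem_erase hQ.1)⟩
  · intro H hH
    by_cases hHW : H = W
    · exact ⟨U, mem_erase.2 ⟨hUWR.2, mem_erase.2 ⟨hUWR.1, hU⟩⟩,
        hHW ▸ subset_inter hWR inter_subset_right⟩
    · exact ⟨H, mem_erase.2 ⟨ne_of_mem_erase hH, mem_erase.2 ⟨hHW, mem_of_mem_erase hH⟩⟩,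
        subset_rfl⟩

theorem IsFacetComplex.union_notMem (hΔ : IsFacetComplex Δ) (hX : X ∈ Δ) (hP : P ∈ Δ)
    (hXP : X ≠ P) : X ∪ P ∉ Δ := fun h => by
  have hPX : P ⊆ X := by
    rw [hΔ X hX _ h subset_union_left]; exact subset_union_right
  exact hXP (hΔ P hP X hX hPX).symm

def mergeFacets (Δ : Finset (Finset V)) (X P : Finset V) : Finset (Finset V) :=
  insert (X ∪ P) ((Δ.erase X).erase P)

theorem mem_mergeFacets : W ∈ mergeFacets Δ X P ↔ W = X ∪ P ∨ W ≠ P ∧ W ≠ X ∧ W ∈ Δ := by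
  simp [mergeFacets]

theorem card_mergeFacets (hΔ : IsFacetComplex Δ) (hX : X ∈ Δ) (hP : P ∈ Δ) (hXP : X ≠ P) :
    #(mergeFacets Δ X P) + 1 = #Δ := by
  have hμ : X ∪ P ∉ (Δ.erase X).erase P :=
    fun h => hΔ.union_notMem hX hP hXP (mem_of_mem_erase (mem_of_mem_erase h))
  rw [mergeFacets, card_insert_of_notMem hμ, card_erase_add_one (mem_erase.2 ⟨hXP.symm, hP⟩),
    card_erase_add_one hX]

theorem card_filter_le_card_filter_mergeFacets (hΔ : IsFacetComplex Δ) (hX : X ∈ Δ) (hP : P ∈ Δ)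
    (hXP : X ≠ P) (hAX : ¬ A ⊆ X) :
    #{W ∈ Δ | A ⊆ W} ≤ #{W ∈ mergeFacets Δ X P | A ⊆ W} := by
  refine card_le_card_of_injOn (fun W => if W = P then X ∪ P else W) (fun W hW => ?_) ?_
  · obtain ⟨hWΔ, hAW⟩ := mem_filter.1 hW
    simp only [coe_filter, Set.mem_ofPred_eq, mem_mergeFacets]
    split_ifs with hWP
    · exact ⟨.inl rfl, hAW.trans (hWP ▸ subset_union_right)⟩
    · exact ⟨.inr ⟨hWP, fun hWX => hAX (hWX ▸ hAW), hWΔ⟩, hAW⟩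
  · intro W₁ h₁ W₂ h₂ h
    have hΔ₁ := (mem_filter.1 h₁).1
    have hΔ₂ := (mem_filter.1 h₂).1
    dsimp only at h
    split_ifs at h with hW₁ hW₂ hW₂
    · rw [hW₁, hW₂]
    · exact absurd (h ▸ hΔ₂) (hΔ.union_notMem hX hP hXP)
    · exact absurd (h ▸ hΔ₁) (hΔ.union_notMem hX hP hXP)
    · exact h

theorem StrongNeighbor.exists_union_inter_subset (hXP : StrongNeighbor Δ X P) (hΔ : IsCycle Δ)
    (h4 : 4 ≤ #Δ) (hW : W ∈ Δ) (hWX : W ≠ X) (hWP : W ≠ P) :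
    ∃ Y, (Y = X ∨ Y = P) ∧ (X ∪ P) ∩ W ⊆ Y ∩ W := by
  obtain ⟨hX, hP, hXP, hstrong⟩ := hXP
  have hXPW : ¬ X ∩ P ⊆ W := fun h => (hstrong W hW h).elim hWX hWP
  rw [union_inter_distrib_right]
  rcases hΔ.inter_subset_or_inter_subset h4 hX hP hW hXP hWX.symm hWP.symm hXPW with h | h
  · exact ⟨P, .inr rfl, union_subset h subset_rfl⟩
  · exact ⟨X, .inl rfl, union_subset subset_rfl h⟩

theorem IsFacetComplex.mergeFacets (hΔ : IsFacetComplex Δ) (hcyc : IsCycle Δ) (h4 : 4 ≤ #Δ)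
    (hXP : StrongNeighbor Δ X P) : IsFacetComplex (mergeFacets Δ X P) := by
  intro W₁ h₁ W₂ h₂ h₁₂
  rw [mem_mergeFacets] at h₁ h₂
  rcases h₁ with rfl | ⟨h₁P, h₁X, h₁⟩ <;> rcases h₂ with rfl | ⟨h₂P, h₂X, h₂⟩
  · rfl
  · exact absurd (hΔ X hXP.1 W₂ h₂ (subset_union_left.trans h₁₂)).symm h₂X
  · obtain ⟨Y, hY, hμY⟩ := hXP.exists_union_inter_subset hcyc h4 h₁ h₁X h₁P
    have hW₁Y : W₁ ⊆ Y := fun x hx => mem_of_mem_inter_left (hμY (mem_inter.2 ⟨h₁₂ hx, hx⟩))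
    rcases hY with rfl | rfl
    · exact absurd (hΔ W₁ h₁ _ hXP.1 hW₁Y) h₁X
    · exact absurd (hΔ W₁ h₁ _ hXP.2.1 hW₁Y) h₁P
  · exact hΔ W₁ h₁ W₂ h₂ h₁₂

theorem subset_union_of_notMem_erase_erase (hH : H ∈ Δ) (hHΩ : H ∉ (Δ.erase X).erase P) :
    H ⊆ X ∪ P := by
  have : H = X ∨ H = P := by
    simp only [mem_erase, not_and_or, not_not] at hHΩ
    tauto
  rcases this with rfl | rfl
  exacts [subset_union_left, subset_union_right]

theorem not_isLeaf_union_mergeFacets (hΔ : IsFacetComplex Δ) (hcyc : IsCycle Δ) (h4 : 4 ≤ #Δ)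
    (hX : X ∈ Δ) (hP : P ∈ Δ) (hXP : X ≠ P) : ¬ IsLeaf (mergeFacets Δ X P) (X ∪ P) := by
  intro hμ
  set Ω := (Δ.erase X).erase P
  have hΩΔ : Ω ⊂ Δ := Finset.ssubset_of_subset_of_ssubset (erase_subset _ _) (erase_ssubset hX)
  have hcardΩ : 1 < #Ω := by
    have : #Ω + 1 = #(Δ.erase X) := card_erase_add_one (mem_erase.2 ⟨hXP.symm, hP⟩)
    have := card_erase_add_one hX
    omega
  have hμΩ : X ∪ P ∉ Ω :=
    fun h => hΔ.union_notMem hX hP hXP (mem_of_mem_erase (mem_of_mem_erase h))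
  obtain ⟨M, hM⟩ := card_pos.1 (by omega : 0 < #Ω)
  obtain ⟨K, hK⟩ := hμ.exists_isJoint (mem_insert_of_mem hM) (ne_of_mem_of_not_mem hM hμΩ)
  rw [IsJoint, mergeFacets, erase_insert hμΩ] at hK
  obtain ⟨hKΩ, hcovK⟩ := hK
  obtain ⟨R, hR, hRK⟩ := (hcyc.isForest_of_ssubset hΩΔ).exists_isLeaf_ne hcardΩ K
  obtain ⟨Q, hQ⟩ := hR.exists_isJoint hKΩ hRK.symm
  -- `R` would be a leaf of `Δ`: the traces of `X` and `P` on `R` lie in that of `X ∪ P`,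
  -- hence in that of `K`
  refine hcyc.2.1 ⟨R, (hQ.of_dominated ?_ subset_rfl fun H hH => ?_).isLeaf (hΩΔ.subset hR.1)⟩
  · exact mem_erase.2 ⟨ne_of_mem_erase hQ.1, hΩΔ.subset (mem_of_mem_erase hQ.1)⟩
  by_cases hHΩ : H ∈ Ω
  · exact ⟨H, mem_erase.2 ⟨ne_of_mem_erase hH, hHΩ⟩, subset_rfl⟩
  have hHμ := subset_union_of_notMem_erase_erase (mem_of_mem_erase hH) hHΩ
  exact ⟨K, mem_erase.2 ⟨hRK.symm, hKΩ⟩,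
    (inter_subset_inter_right hHμ).trans (inter_subset_inter_swap (hcovK R hR.1))⟩

theorem not_isLeaf_mergeFacets_of_ne (hcyc : IsCycle Δ) (h4 : 4 ≤ #Δ)
    (hXP : StrongNeighbor Δ X P) (hWμ : W ≠ X ∪ P) : ¬ IsLeaf (mergeFacets Δ X P) W := by
  intro hW
  obtain ⟨hWP, hWX, hWΔ⟩ := (mem_mergeFacets.1 hW.1).resolve_left hWμ
  obtain ⟨K, hK⟩ := hW.exists_isJoint (mem_insert_self _ _) hWμ.symm
  obtain ⟨K', hK', hKK'⟩ : ∃ K' ∈ Δ.erase W, K ∩ W ⊆ K' ∩ W := by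
    by_cases hKμ : K = X ∪ P
    · obtain ⟨Y, hY, hμY⟩ := hXP.exists_union_inter_subset hcyc h4 hWΔ hWX hWP
      refine ⟨Y, ?_, hKμ ▸ hμY⟩
      rcases hY with rfl | rfl
      exacts [mem_erase.2 ⟨hWX.symm, hXP.1⟩, mem_erase.2 ⟨hWP.symm, hXP.2.1⟩]
    · obtain ⟨hKW, hKmem⟩ := mem_erase.1 hK.1
      exact ⟨K, mem_erase.2 ⟨hKW, ((mem_mergeFacets.1 hKmem).resolve_left hKμ).2.2⟩, subset_rfl⟩
  refine hcyc.2.1 ⟨W, (hK.of_dominated hK' hKK' fun H hH => ?_).isLeaf hWΔ⟩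
  by_cases hHΩ : H ∈ (Δ.erase X).erase P
  · exact ⟨H, mem_erase.2 ⟨ne_of_mem_erase hH, mem_insert_of_mem hHΩ⟩, subset_rfl⟩
  · exact ⟨X ∪ P, mem_erase.2 ⟨hWμ.symm, mem_insert_self _ _⟩,
      inter_subset_inter_right (subset_union_of_notMem_erase_erase (mem_of_mem_erase hH) hHΩ)⟩

theorem isLeaf_insert_union_of_isLeaf (hLS : L ∈ S) (hLμ : L ≠ X ∪ P) (hL : IsLeaf Γ L)
    (hΓ : Γ ⊆ insert X (insert P S)) (hSΓ : S ⊆ Γ) (hY : Y ∈ Γ.erase L)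
    (hμY : (X ∪ P) ∩ L ⊆ Y ∩ L) : IsLeaf (insert (X ∪ P) S) L := by
  obtain ⟨Q, hQ⟩ := hL.exists_isJoint (mem_of_mem_erase hY) (ne_of_mem_erase hY)
  obtain ⟨Q', hQ', hQQ'⟩ : ∃ Q' ∈ (insert (X ∪ P) S).erase L, Q ∩ L ⊆ Q' ∩ L := by
    obtain ⟨hQL, hQΓ⟩ := mem_erase.1 hQ.1
    by_cases hQS : Q ∈ S
    · exact ⟨Q, mem_erase.2 ⟨hQL, mem_insert_of_mem hQS⟩, subset_rfl⟩
    refine ⟨X ∪ P, mem_erase.2 ⟨hLμ.symm, mem_insert_self _ _⟩, inter_subset_inter_right ?_⟩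
    rcases mem_insert.1 (hΓ hQΓ) with rfl | hQ
    · exact subset_union_left
    rcases mem_insert.1 hQ with rfl | hQ
    exacts [subset_union_right, absurd hQ hQS]
  refine (hQ.of_dominated hQ' hQQ' fun H hH => ?_).isLeaf (mem_insert_of_mem hLS)
  obtain ⟨hHL, hH⟩ := mem_erase.1 hH
  rcases mem_insert.1 hH with rfl | hHS
  · exact ⟨Y, hY, hμY⟩
  · exact ⟨H, mem_erase.2 ⟨hHL, hSΓ hHS⟩, subset_rfl⟩

theorem IsCycle.exists_isLeaf_insert_union_of_inter_subset (hcyc : IsCycle Δ)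
    (hΓ : insert X S ⊂ Δ) (hS : S.Nonempty) (hXS : X ∉ S) (hμS : X ∪ P ∉ S)
    (hPX : ∀ H ∈ S, P ∩ H ⊆ X ∩ H) : ∃ L, IsLeaf (insert (X ∪ P) S) L := by
  obtain ⟨M, hM⟩ := hS
  obtain ⟨L, hL, hLX⟩ := (hcyc.isForest_of_ssubset hΓ).exists_isLeaf_ne (one_lt_card.2
    ⟨X, mem_insert_self _ _, M, mem_insert_of_mem hM, (ne_of_mem_of_not_mem hM hXS).symm⟩) X
  have hLS : L ∈ S := (mem_insert.1 hL.1).resolve_left hLX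
  refine ⟨L, isLeaf_insert_union_of_isLeaf hLS (ne_of_mem_of_not_mem hLS hμS) hL
    (insert_subset_insert X (subset_insert P S)) (subset_insert X S)
    (mem_erase.2 ⟨hLX.symm, mem_insert_self X S⟩) ?_⟩
  rw [union_inter_distrib_right]
  exact union_subset subset_rfl (hPX L hLS)

theorem IsCycle.exists_isLeaf_insert_union (hcyc : IsCycle Δ) (h4 : 4 ≤ #Δ)
    (hXP : StrongNeighbor Δ X P) (hT : insert X (insert P S) ⊂ Δ) (hS : S.Nonempty)
    (hSΩ : S ⊆ (Δ.erase X).erase P) (hμS : X ∪ P ∉ S) : ∃ L, IsLeaf (insert (X ∪ P) S) L := by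
  set T := insert X (insert P S)
  have hST : S ⊆ T := (subset_insert P S).trans (subset_insert X _)
  have hXS : X ∉ S := fun h => ne_of_mem_erase (mem_of_mem_erase (hSΩ h)) rfl
  have hPS : P ∉ S := fun h => ne_of_mem_erase (hSΩ h) rfl
  obtain ⟨L, hL, hLX⟩ := (hcyc.isForest_of_ssubset hT).exists_isLeaf_ne
    (one_lt_card.2 ⟨X, mem_insert_self _ _, P, mem_insert_of_mem (mem_insert_self _ _), hXP.2.2.1⟩) X
  by_cases hLS : L ∈ S
  · obtain ⟨hLP, hLX, hLΔ⟩ := mem_erase.1 (hSΩ hLS) |>.imp_right mem_erase.1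
    obtain ⟨Y, hY, hμY⟩ := hXP.exists_union_inter_subset hcyc h4 hLΔ hLX hLP
    refine ⟨L, isLeaf_insert_union_of_isLeaf hLS (ne_of_mem_of_not_mem hLS hμS) hL subset_rfl hST
      (mem_erase.2 ⟨?_, ?_⟩) hμY⟩
    · rcases hY with rfl | rfl
      exacts [hLX.symm, hLP.symm]
    · rcases hY with rfl | rfl
      exacts [mem_insert_self _ _, mem_insert_of_mem (mem_insert_self _ _)]
  have hP : IsLeaf T P := by
    rcases mem_insert.1 hL.1 with h | h
    · exact absurd h hLX
    · rwa [← (mem_insert.1 h).resolve_right hLS]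
  obtain ⟨Q, hQ⟩ := hP.exists_isJoint (mem_insert_self X _) hXP.2.2.1
  have hQX : Q = X := by
    have hXPQ : X ∩ P ⊆ Q :=
      (hQ.2 X (mem_erase.2 ⟨hXP.2.2.1, mem_insert_self _ _⟩)).trans inter_subset_left
    exact (hXP.2.2.2 Q (hT.subset (mem_of_mem_erase hQ.1)) hXPQ).resolve_right
      (ne_of_mem_erase hQ.1)
  refine hcyc.exists_isLeaf_insert_union_of_inter_subset
    (Finset.ssubset_of_subset_of_ssubset (insert_subset_insert X (subset_insert P S)) hT)
    hS hXS hμS fun H hH => ?_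
  exact hQX ▸ inter_subset_inter_swap (hQ.2 H (mem_erase.2 ⟨ne_of_mem_of_not_mem hH hPS, hST hH⟩))

theorem IsCycle.exists_isLeaf_of_ssubset_mergeFacets (hcyc : IsCycle Δ) (h4 : 4 ≤ #Δ)
    (hXP : StrongNeighbor Δ X P) (hΓ : Γ ⊂ mergeFacets Δ X P) (hne : Γ.Nonempty) :
    ∃ L, IsLeaf Γ L := by
  have hΓΩ : Γ.erase (X ∪ P) ⊆ (Δ.erase X).erase P := fun H hH => by
    obtain ⟨hHμ, hHΓ⟩ := mem_erase.1 hH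
    exact (mem_insert.1 (hΓ.subset hHΓ)).resolve_left hHμ
  by_cases hμ : X ∪ P ∈ Γ
  swap
  · refine hcyc.2.2 Γ (Finset.ssubset_of_subset_of_ssubset ?_ (erase_ssubset hXP.1)) hne
    rw [← erase_eq_of_notMem hμ]
    exact hΓΩ.trans (erase_subset _ _)
  rw [← insert_erase hμ]
  rcases (Γ.erase (X ∪ P)).eq_empty_or_nonempty with hS | hS
  · exact ⟨X ∪ P, mem_insert_self _ _, .inl (by rw [hS]; rfl)⟩
  refine hcyc.exists_isLeaf_insert_union h4 hXP ?_ hS hΓΩ (notMem_erase _ _)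
  obtain ⟨W, hW, hWΓ⟩ := exists_of_ssubset hΓ
  have hWμ : W ≠ X ∪ P := (ne_of_mem_of_not_mem hμ hWΓ).symm
  obtain ⟨hWP, hWX, hWΔ⟩ := (mem_mergeFacets.1 hW).resolve_left hWμ
  refine (ssubset_iff_of_subset ?_).2 ⟨W, hWΔ, ?_⟩
  · exact insert_subset hXP.1 (insert_subset hXP.2.1 (hΓΩ.trans
      ((erase_subset _ _).trans (erase_subset _ _))))
  · simp only [mem_insert, mem_erase, not_or, not_and]
    exact ⟨hWX, hWP, fun _ h => hWΓ h⟩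

theorem IsCycle.mergeFacets (hcyc : IsCycle Δ) (hΔ : IsFacetComplex Δ) (h4 : 4 ≤ #Δ)
    (hXP : StrongNeighbor Δ X P) : IsCycle (mergeFacets Δ X P) := by
  refine ⟨insert_nonempty _ _, fun ⟨L, hL⟩ => ?_, fun Γ hΓ hne =>
    hcyc.exists_isLeaf_of_ssubset_mergeFacets h4 hXP hΓ hne⟩
  by_cases hLμ : L = X ∪ P
  · exact not_isLeaf_union_mergeFacets hΔ hcyc h4 hXP.1 hXP.2.1 hXP.2.2.1 (hLμ ▸ hL)
  · exact not_isLeaf_mergeFacets_of_ne hcyc h4 hXP hLμ hL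

theorem IsCycle.subset_of_two_lt_card_filter (hcyc : IsCycle Δ) (hΔ : IsFacetComplex Δ)
    (hA : 2 < #{W ∈ Δ | A ⊆ W}) (hW : W ∈ Δ) : A ⊆ W := by
  induction hn : #Δ using Nat.strong_induction_on generalizing Δ W with
  | _ n ih =>
  by_contra hAW
  have h4 : 4 ≤ #Δ := by
    have : #{W ∈ Δ | A ⊆ W} < #Δ := card_lt_card (filter_ssubset.2 ⟨W, hW, hAW⟩)
    omega
  have hcard : 1 < #(Δ.erase W) := by
    have := card_erase_add_one hW
    omega
  by_cases hrest : ∀ H ∈ Δ.erase W, A ⊆ H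
  · -- the traces on `W` of the other facets form a chain, so `W` would be a leaf
    have htot : ∀ H₁ ∈ Δ.erase W, ∀ H₂ ∈ Δ.erase W, H₁ ∩ W ⊆ H₂ ∩ W ∨ H₂ ∩ W ⊆ H₁ ∩ W := by
      intro H₁ h₁ H₂ h₂
      by_cases h₁₂ : H₁ = H₂
      · exact .inl (h₁₂ ▸ subset_rfl)
      refine hcyc.inter_subset_or_inter_subset h4 (mem_of_mem_erase h₁) (mem_of_mem_erase h₂) hW
        h₁₂ (ne_of_mem_erase h₁) (ne_of_mem_erase h₂) fun h => hAW ?_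
      exact (subset_inter (hrest H₁ h₁) (hrest H₂ h₂)).trans h
    obtain ⟨K, hK⟩ := exists_isJoint_of_inter_total (card_pos.1 (zero_lt_one.trans hcard)) htot
    exact hcyc.2.1 ⟨W, hK.isLeaf hW⟩
  push Not at hrest
  obtain ⟨W', hW', hAW'⟩ := hrest
  obtain ⟨R, hR, hRW'⟩ := (hcyc.isForest_of_ssubset (erase_ssubset hW)).exists_isLeaf_ne hcard W'
  have hWR : StrongNeighbor Δ W R := strongNeighbor_of_isLeaf_erase hcyc.2.1 hW hR hW' hRW'.symm
  refine hAW' (ih _ ?_ (hcyc.mergeFacets hΔ h4 hWR) (hΔ.mergeFacets hcyc h4 hWR) ?_ ?_ rfl)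
  · have := card_mergeFacets hΔ hW hWR.2.1 hWR.2.2.1
    omega
  · exact hA.trans_le (card_filter_le_card_filter_mergeFacets hΔ hW hWR.2.1 hWR.2.2.1 hAW)
  · exact mem_mergeFacets.2 (.inr ⟨hRW'.symm, ne_of_mem_erase hW', mem_of_mem_erase hW'⟩)

theorem cycle_non_neighbors_intersection (Δ : Finset (Finset V))
    (hΔ : IsFacetComplex Δ) (hcyc : IsCycle Δ) (F G : Finset V)
    (hF : F ∈ Δ) (hG : G ∈ Δ) (hne : F ≠ G)
    (hns : ¬ StrongNeighbor Δ F G) :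
    ∀ H ∈ Δ, F ∩ G ⊆ H := by
  obtain ⟨H₁, hH₁, hFGH₁, hH₁F, hH₁G⟩ : ∃ H₁ ∈ Δ, F ∩ G ⊆ H₁ ∧ H₁ ≠ F ∧ H₁ ≠ G := by
    simpa [StrongNeighbor, hF, hG, hne] using hns
  refine fun H hH => hcyc.subset_of_two_lt_card_filter hΔ (two_lt_card.2 ?_) hH
  exact ⟨F, by simp [hF], G, by simp [hG], H₁, by simp [hH₁, hFGH₁], hne, hH₁F.symm, hH₁G.symm⟩
end

section
/- Let Δ be a facet complex, A the intersection of all facets of Δ, and Δ' = { F \ A : F ∈ Δ }. Then Δ' is a facet complex, and Δ is a cycle if and only if Δ' is a cycle. -/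
variable {V : Type*} [DecidableEq V]

/-!
Every facet of `Δ` contains `A`, so removing `A` is injective on `Δ` and does not change whether
`H ∩ F ⊆ G ∩ F` for facets `F, G, H`. Being a leaf depends only on these containments, so
`F ↦ F \ A` matches the leaves of every subcollection of `Δ` with those of its image, and the
subcollections of `Δ` with those of `Δ'`.
-/

theorem Finset.image_erase_of_injOn {α β : Type*} [DecidableEq α] [DecidableEq β]
    {f : α → β} {s : Finset α} (hf : Set.InjOn f s) {a : α} (ha : a ∈ s) :
    (s.image f).erase (f a) = (s.erase a).image f := by
  ext b
  simp only [mem_erase, mem_image]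
  constructor
  · rintro ⟨hb, x, hx, rfl⟩
    exact ⟨x, ⟨fun h => hb (h ▸ rfl), hx⟩, rfl⟩
  · rintro ⟨x, ⟨hxa, hx⟩, rfl⟩
    exact ⟨fun h => hxa (hf hx ha h), x, hx, rfl⟩

theorem Finset.image_ssubset_image_iff_of_injOn {α β : Type*} [DecidableEq β] {f : α → β}
    {s s₁ s₂ : Finset α} (hf : Set.InjOn f s) (h₁ : s₁ ⊆ s) (h₂ : s₂ ⊆ s) :
    s₁.image f ⊂ s₂.image f ↔ s₁ ⊂ s₂ :=
  lt_iff_lt_of_le_iff_le' (image_subset_image_iff_of_injOn hf h₂ h₁)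
    (image_subset_image_iff_of_injOn hf h₁ h₂)

theorem Finset.sdiff_subset_sdiff_iff_of_subset {α : Type*} [DecidableEq α] {s t u : Finset α}
    (h : u ⊆ t) : s \ u ⊆ t \ u ↔ s ⊆ t := by
  rw [sdiff_le_iff, sup_sdiff_cancel_right h]

theorem isLeaf_iff_erase {Γ : Finset (Finset V)} {F : Finset V} (hF : F ∈ Γ) :
    IsLeaf Γ F ↔ Γ.erase F = ∅ ∨ ∃ G ∈ Γ.erase F, ∀ H ∈ Γ.erase F, H ∩ F ⊆ G ∩ F := by
  simp [IsLeaf, Finset.erase_eq_empty_iff, hF, Finset.ne_empty_of_mem hF]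

section Transport

variable {W : Type*} [DecidableEq W]

/-- `H ∩ F` is the trace of `H` on `F`; whether `F` is a leaf depends only on containments
between traces on `F`. -/
def PreservesTraces (f : Finset V → Finset W) (Δ : Finset (Finset V)) : Prop :=
  ∀ F ∈ Δ, ∀ G ∈ Δ, ∀ H ∈ Δ, f H ∩ f F ⊆ f G ∩ f F ↔ H ∩ F ⊆ G ∩ F

namespace PreservesTraces

variable {f : Finset V → Finset W} {Δ Γ : Finset (Finset V)}

theorem mono (hf : PreservesTraces f Δ) (hΓ : Γ ⊆ Δ) : PreservesTraces f Γ :=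
  fun F hF G hG H hH => hf F (hΓ hF) G (hΓ hG) H (hΓ hH)

theorem subset_iff (hf : PreservesTraces f Δ) {F G : Finset V} (hF : F ∈ Δ) (hG : G ∈ Δ) :
    f F ⊆ f G ↔ F ⊆ G := by
  simpa [Finset.subset_inter_iff] using hf F hF G hG F hF

theorem injOn (hf : PreservesTraces f Δ) : Set.InjOn f Δ := fun _ hF _ hG h =>
  (Finset.Subset.antisymm ((hf.subset_iff hF hG).1 h.le) ((hf.subset_iff hG hF).1 h.ge))

theorem isFacetComplex_image (hf : PreservesTraces f Δ) (hΔ : IsFacetComplex Δ) :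
    IsFacetComplex (Δ.image f) := by
  simp only [IsFacetComplex, Finset.forall_mem_image]
  exact fun F hF G hG h => congrArg f (hΔ F hF G hG ((hf.subset_iff hF hG).1 h))

theorem isLeaf_image_iff (hf : PreservesTraces f Γ) {F : Finset V} (hF : F ∈ Γ) :
    IsLeaf (Γ.image f) (f F) ↔ IsLeaf Γ F := by
  have hmem : ∀ {H}, H ∈ Γ.erase F → H ∈ Γ := Finset.mem_of_mem_erase
  rw [isLeaf_iff_erase hF, isLeaf_iff_erase (Finset.mem_image_of_mem f hF),
    Finset.image_erase_of_injOn hf.injOn hF, Finset.image_eq_empty]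
  have traces : ∀ G ∈ Γ.erase F, ∀ H ∈ Γ.erase F,
      (f H ∩ f F ⊆ f G ∩ f F ↔ H ∩ F ⊆ G ∩ F) := fun G hG H hH =>
    hf F hF G (hmem hG) H (hmem hH)
  simp only [Finset.exists_mem_image, Finset.forall_mem_image]
  exact or_congr_right (exists_congr fun G => and_congr_right fun hG =>
    forall₂_congr fun H hH => traces G hG H hH)

theorem exists_isLeaf_image_iff (hf : PreservesTraces f Γ) :
    (∃ F', IsLeaf (Γ.image f) F') ↔ ∃ F, IsLeaf Γ F := by
  constructor
  · rintro ⟨F', hF'⟩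
    obtain ⟨F, hF, rfl⟩ := Finset.mem_image.1 hF'.1
    exact ⟨F, (hf.isLeaf_image_iff hF).1 hF'⟩
  · rintro ⟨F, hF⟩
    exact ⟨f F, (hf.isLeaf_image_iff hF.1).2 hF⟩

theorem isCycle_image_iff (hf : PreservesTraces f Δ) : IsCycle (Δ.image f) ↔ IsCycle Δ := by
  refine and_congr Finset.image_nonempty (and_congr (not_congr hf.exists_isLeaf_image_iff)
    ⟨fun h Γ hΓ hne => ?_, fun h Γ' hΓ' hne => ?_⟩)
  · rw [← (hf.mono hΓ.subset).exists_isLeaf_image_iff]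
    exact h _ ((Finset.image_ssubset_image_iff_of_injOn hf.injOn hΓ.subset subset_rfl).2 hΓ)
      (hne.image f)
  · obtain ⟨Γ, hΓΔ, rfl⟩ := Finset.subset_image_iff.1 hΓ'.subset
    rw [(hf.mono hΓΔ).exists_isLeaf_image_iff]
    exact h Γ ((Finset.image_ssubset_image_iff_of_injOn hf.injOn hΓΔ subset_rfl).1 hΓ')
      (Finset.image_nonempty.1 hne)

end PreservesTraces

end Transport

theorem preservesTraces_sdiff {Δ : Finset (Finset V)} {A : Finset V} (hA : ∀ F ∈ Δ, A ⊆ F) :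
    PreservesTraces (· \ A) Δ := by
  intro F hF G hG H _
  change (H \ A) ⊓ (F \ A) ≤ (G \ A) ⊓ (F \ A) ↔ H ⊓ F ≤ G ⊓ F
  rw [← inf_sdiff, ← inf_sdiff]
  exact Finset.sdiff_subset_sdiff_iff_of_subset (Finset.subset_inter (hA G hG) (hA F hF))

theorem cycle_iff_cone_base_cycle (Δ : Finset (Finset V))
    (hΔ : IsFacetComplex Δ)
    (A : Finset V) (hA : A = (Δ.sup id).filter (fun v => ∀ F ∈ Δ, v ∈ F)) :
    IsFacetComplex (Δ.image (fun F => F \ A)) ∧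
      (IsCycle Δ ↔ IsCycle (Δ.image (fun F => F \ A))) := by
  have hAΔ : ∀ F ∈ Δ, A ⊆ F := by
    intro F hF v hv
    rw [hA, Finset.mem_filter] at hv
    exact hv.2 F hF
  have hf := preservesTraces_sdiff hAΔ
  exact ⟨hf.isFacetComplex_image hΔ, hf.isCycle_image_iff.symm⟩
end

section
/- A facet complex Δ is a cycle if and only if Δ can be enumerated as F₁, …, Fₙ with n ≥ 3, F₁ ∼_Δ F₂ ∼_Δ ⋯ ∼_Δ Fₙ ∼_Δ F₁, and Fᵢ ∩ Fⱼ = ⋂_{k=1}^{n} F_k whenever j ≢ i−1, i, i+1 (mod n). -/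
variable {V : Type*} [DecidableEq V]

open Fin.NatCast Fin.CommRing

lemma leaf_joint {Δ : Finset (Finset V)} {F : Finset V} (h : IsLeaf Δ F)
    (h2 : 2 ≤ Δ.card) : ∃ G ∈ Δ.erase F, ∀ H ∈ Δ.erase F, H ∩ F ⊆ G ∩ F := by
  rcases h.2 with h1 | h1
  · subst h1; simp at h2
  · exact h1

lemma leaf_of_pair {A B : Finset V} (hAB : A ≠ B) : IsLeaf {A, B} A := by
  refine ⟨by simp, Or.inr ⟨B, ?_, ?_⟩⟩
  · simp [Finset.mem_erase, hAB.symm]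
  · intro H hH
    have : H = B := by
      rcases Finset.mem_erase.1 hH with ⟨hne, hm⟩
      simpa [Finset.mem_insert, hne] using hm
    subst this; exact subset_rfl

lemma lift_leaf {Γ : Finset (Finset V)} {G K L : Finset V}
    (hK : K ∈ Γ.erase G) (hKj : ∀ H ∈ Γ.erase G, H ∩ G ⊆ K ∩ G)
    (hL : IsLeaf (Γ.erase G) L) (hLK : L ≠ K) (h2 : 2 ≤ (Γ.erase G).card) :
    IsLeaf Γ L := by
  obtain ⟨J, hJ, hJj⟩ := leaf_joint hL h2
  have hLmem : L ∈ Γ.erase G := hL.1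
  refine ⟨Finset.mem_of_mem_erase hLmem, Or.inr ⟨J, ?_, ?_⟩⟩
  · exact Finset.mem_erase.2 ⟨(Finset.mem_erase.1 hJ).1,
      Finset.mem_of_mem_erase (Finset.mem_of_mem_erase hJ)⟩
  · intro H hH
    by_cases hHG : H = G
    · subst hHG
      have h1 : H ∩ L ⊆ K ∩ L := by
        intro x hx
        rcases Finset.mem_inter.1 hx with ⟨hx1, hx2⟩
        have : x ∈ K ∩ H := hKj L hLmem (Finset.mem_inter.2 ⟨hx2, hx1⟩)
        exact Finset.mem_inter.2 ⟨(Finset.mem_inter.1 this).1, hx2⟩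
      have h2' : K ∩ L ⊆ J ∩ L := hJj K (Finset.mem_erase.2 ⟨fun e => hLK e.symm, hK⟩)
      exact h1.trans h2'
    · have : H ∈ (Γ.erase G).erase L := by
        rcases Finset.mem_erase.1 hH with ⟨hne, hm⟩
        exact Finset.mem_erase.2 ⟨hne, Finset.mem_erase.2 ⟨hHG, hm⟩⟩
      exact hJj H this

lemma forest_two_leaves :
    ∀ Γ : Finset (Finset V), (∀ Γ' ⊆ Γ, Γ'.Nonempty → ∃ L, IsLeaf Γ' L) →
    2 ≤ Γ.card → ∃ L₁ L₂, L₁ ≠ L₂ ∧ IsLeaf Γ L₁ ∧ IsLeaf Γ L₂ := by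
  intro Γ
  induction Γ using Finset.strongInduction with
  | _ Γ ih =>
    intro hforest h2
    rcases eq_or_lt_of_le h2 with hc2 | hc3
    · obtain ⟨A, B, hAB, rfl⟩ := Finset.card_eq_two.1 hc2.symm
      exact ⟨A, B, hAB, leaf_of_pair hAB, by
        rw [Finset.pair_comm]; exact leaf_of_pair hAB.symm⟩
    · obtain ⟨G, hG⟩ := hforest Γ subset_rfl (Finset.card_pos.1 (by omega))
      obtain ⟨K, hK, hKj⟩ := leaf_joint hG h2
      have hGm : G ∈ Γ := hG.1
      have hsub : Γ.erase G ⊂ Γ := Finset.erase_ssubset hGm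
      have hcard : 2 ≤ (Γ.erase G).card := by
        rw [Finset.card_erase_of_mem hGm]; omega
      obtain ⟨L₁, L₂, hL12, hL1, hL2⟩ := ih _ hsub
        (fun Γ' h h' => hforest Γ' (h.trans hsub.1) h') hcard
      rcases eq_or_ne L₁ K with h | h
      · refine ⟨G, L₂, ?_, hG, lift_leaf hK hKj hL2 (h ▸ hL12.symm) hcard⟩
        exact fun e => (Finset.mem_erase.1 hL2.1).1 e.symm |>.elim
      · refine ⟨G, L₁, ?_, hG, lift_leaf hK hKj hL1 h hcard⟩
        exact fun e => (Finset.mem_erase.1 hL1.1).1 e.symm |>.elim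

lemma strong_of_leaf_erase {Δ : Finset (Finset V)} {F G : Finset V}
    (hnl : ¬ ∃ L, IsLeaf Δ L) (hF : F ∈ Δ) (hG : IsLeaf (Δ.erase F) G)
    (h2 : 2 ≤ (Δ.erase F).card) : StrongNeighbor Δ F G := by
  obtain ⟨K, hK, hKj⟩ := leaf_joint hG h2
  have hGm : G ∈ Δ.erase F := hG.1
  have hGF : G ≠ F := (Finset.mem_erase.1 hGm).1
  refine ⟨hF, Finset.mem_of_mem_erase hGm, hGF.symm, ?_⟩
  intro H hH hsub
  by_contra hcon
  push_neg at hcon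
  obtain ⟨hHF, hHG⟩ := hcon
  -- F ∩ G ⊆ K ∩ G
  have hHm : H ∈ (Δ.erase F).erase G :=
    Finset.mem_erase.2 ⟨hHG, Finset.mem_erase.2 ⟨hHF, hH⟩⟩
  have key : F ∩ G ⊆ K ∩ G := by
    intro x hx
    have hxH : x ∈ H ∩ G :=
      Finset.mem_inter.2 ⟨hsub hx, (Finset.mem_inter.1 hx).2⟩
    exact hKj H hHm hxH
  -- G is a leaf of Δ with joint K : contradiction
  refine hnl ⟨G, Finset.mem_of_mem_erase hGm, Or.inr ⟨K, ?_, ?_⟩⟩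
  · exact Finset.mem_erase.2 ⟨(Finset.mem_erase.1 hK).1,
      Finset.mem_of_mem_erase (Finset.mem_of_mem_erase hK)⟩
  · intro H' hH'
    by_cases hH'F : H' = F
    · subst hH'F; exact key
    · have : H' ∈ (Δ.erase F).erase G := by
        rcases Finset.mem_erase.1 hH' with ⟨hne, hm⟩
        exact Finset.mem_erase.2 ⟨hne, Finset.mem_erase.2 ⟨hH'F, hm⟩⟩
      exact hKj H' this

lemma cycle_card_ge_three {Δ : Finset (Finset V)} (h : IsCycle Δ) : 3 ≤ Δ.card := by
  obtain ⟨hne, hnl, _⟩ := h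
  rcases Nat.lt_or_ge Δ.card 3 with hlt | hge
  · exfalso
    interval_cases hc : Δ.card
    · simp [Finset.card_eq_zero.1 hc] at hne
    · obtain ⟨A, rfl⟩ := Finset.card_eq_one.1 hc
      exact hnl ⟨A, by simp, Or.inl rfl⟩
    · obtain ⟨A, B, hAB, rfl⟩ := Finset.card_eq_two.1 hc
      exact hnl ⟨A, leaf_of_pair hAB⟩
  · exact hge

lemma two_strong_neighbors {Δ : Finset (Finset V)} (h : IsCycle Δ) {F : Finset V}
    (hF : F ∈ Δ) : ∃ G₁ G₂, G₁ ≠ G₂ ∧ StrongNeighbor Δ F G₁ ∧ StrongNeighbor Δ F G₂ := by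
  have h3 := cycle_card_ge_three h
  have hcard : 2 ≤ (Δ.erase F).card := by
    rw [Finset.card_erase_of_mem hF]; omega
  have hforest : ∀ Γ' ⊆ Δ.erase F, Γ'.Nonempty → ∃ L, IsLeaf Γ' L := by
    intro Γ' hsub hne
    refine h.2.2 Γ' ?_ hne
    refine Finset.ssubset_iff_of_subset (hsub.trans (Finset.erase_subset _ _)) |>.2 ?_
    exact ⟨F, hF, fun hmem => (Finset.mem_erase.1 (hsub hmem)).1 rfl⟩
  obtain ⟨L₁, L₂, h12, hL1, hL2⟩ := forest_two_leaves _ hforest hcard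
  exact ⟨L₁, L₂, h12, strong_of_leaf_erase h.2.1 hF hL1 hcard,
    strong_of_leaf_erase h.2.1 hF hL2 hcard⟩

section FinStuff
variable {N : ℕ}

lemma fin_add_one_ne (i : Fin (N+3)) : i + 1 ≠ i := by
  intro h
  have h2 : i + 1 = i + 0 := by rw [add_zero]; exact h
  have : (1 : Fin (N+3)) = 0 := add_left_cancel h2
  simp [Fin.ext_iff] at this

lemma fin_sub_one_ne (i : Fin (N+3)) : i - 1 ≠ i := by
  intro h
  exact fin_add_one_ne (i-1) (by rw [sub_add_cancel]; exact h.symm)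

lemma fin_two_step_ne (i : Fin (N+3)) : i + 1 ≠ i - 1 := by
  intro h
  have h2 : i + 2 = i + 0 := by
    rw [show i + 2 = i + 1 + 1 from by ring, h, sub_add_cancel, add_zero]
  have h3 : (2 : Fin (N+3)) = 0 := add_left_cancel h2
  simp [Fin.ext_iff, Nat.mod_eq_of_lt (show 2 < N + 3 by omega)] at h3

end FinStuff

lemma no_leaf_of_cyclic_chain {Δ : Finset (Finset V)} {N : ℕ}
    {F : Fin (N+3) → Finset V} (hinj : Function.Injective F)
    (hcons : ∀ i, StrongNeighbor Δ (F i) (F (i + 1))) :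
    ¬ ∃ L, IsLeaf (Finset.image F Finset.univ) L := by
  rintro ⟨L, hLm, hrest⟩
  obtain ⟨i, -, rfl⟩ := Finset.mem_image.1 hLm
  have hmemΔ : ∀ j, F j ∈ Δ := fun j => (hcons j).1
  have hne1 : F (i + 1) ≠ F i := fun h => fin_add_one_ne i (hinj h)
  have hne2 : F (i - 1) ≠ F i := fun h => fin_sub_one_ne i (hinj h)
  have hmem1 : F (i + 1) ∈ (Finset.image F Finset.univ).erase (F i) :=
    Finset.mem_erase.2 ⟨hne1, Finset.mem_image_of_mem F (Finset.mem_univ _)⟩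
  have hmem2 : F (i - 1) ∈ (Finset.image F Finset.univ).erase (F i) :=
    Finset.mem_erase.2 ⟨hne2, Finset.mem_image_of_mem F (Finset.mem_univ _)⟩
  rcases hrest with heq | ⟨K, hKm, hKj⟩
  · rw [heq] at hmem1
    exact hne1 (Finset.mem_singleton.1 (Finset.mem_of_mem_erase hmem1))
  · have hKΔ : K ∈ Δ := by
      obtain ⟨j, -, rfl⟩ := Finset.mem_image.1 (Finset.mem_of_mem_erase hKm)
      exact hmemΔ j
    have hKne : K ≠ F i := (Finset.mem_erase.1 hKm).1
    have hK1 : K = F (i + 1) := by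
      have hs : F i ∩ F (i + 1) ⊆ K := by
        intro x hx
        have : x ∈ F (i+1) ∩ F i := by
          rw [Finset.inter_comm] at hx; exact hx
        exact Finset.mem_inter.1 (hKj _ hmem1 this) |>.1
      rcases (hcons i).2.2.2 K hKΔ hs with h | h
      · exact absurd h hKne
      · exact h
    have hK2 : K = F (i - 1) := by
      have hc := hcons (i - 1)
      rw [sub_add_cancel] at hc
      have hs : F (i - 1) ∩ F i ⊆ K := fun x hx =>
        (Finset.mem_inter.1 (hKj _ hmem2 hx)).1
      rcases hc.2.2.2 K hKΔ hs with h | h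
      · exact h
      · exact absurd h hKne
    rw [hK1] at hK2
    exact fin_two_step_ne i (hinj hK2)

lemma structure_isCycle {Δ : Finset (Finset V)} {N : ℕ}
    {F : Fin (N+3) → Finset V} (hinj : Function.Injective F)
    (himg : Finset.image F Finset.univ = Δ)
    (hcons : ∀ i, StrongNeighbor Δ (F i) (F (i + 1)))
    (hvoid : ∀ i j : Fin (N + 3), j ≠ i - 1 → j ≠ i → j ≠ i + 1 →
      F i ∩ F j = Finset.univ.inf' Finset.univ_nonempty F) :
    IsCycle Δ := by
  set c : Finset V := Finset.univ.inf' Finset.univ_nonempty F with hc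
  have hcsub : ∀ k, c ⊆ F k := fun k =>
    Finset.le_iff_subset.1 (Finset.inf'_le _ (Finset.mem_univ k))
  have hmemΔ : ∀ j, F j ∈ Δ := fun j => himg ▸ Finset.mem_image_of_mem F (Finset.mem_univ _)
  refine ⟨⟨F 0, hmemΔ 0⟩, by rw [← himg]; exact no_leaf_of_cyclic_chain hinj hcons, ?_⟩
  intro Γ hΓ hne
  -- find i with F i ∈ Γ, F (i+1) ∉ Γ
  have hrep : ∀ A ∈ Γ, ∃ j, F j = A := by
    intro A hA
    obtain ⟨j, -, hj⟩ := Finset.mem_image.1 (himg ▸ hΓ.1 hA)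
    exact ⟨j, hj⟩
  obtain ⟨i, hiΓ, hi1Γ⟩ : ∃ i, F i ∈ Γ ∧ F (i + 1) ∉ Γ := by
    by_contra hno
    push_neg at hno
    obtain ⟨A, hA⟩ := hne
    obtain ⟨i₀, rfl⟩ := hrep A hA
    have hall : ∀ k : ℕ, F (i₀ + (k : Fin (N+3))) ∈ Γ := by
      intro k
      induction k with
      | zero => simpa using hA
      | succ k ih =>
        have he : i₀ + ((k+1 : ℕ) : Fin (N+3)) = (i₀ + (k : ℕ)) + 1 := by
          push_cast; ring
        rw [he]
        exact hno _ ih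
    have : Δ ⊆ Γ := by
      intro B hB
      obtain ⟨j, -, rfl⟩ := Finset.mem_image.1 (himg ▸ hB)
      have he : i₀ + (((j - i₀).val : ℕ) : Fin (N+3)) = j := by
        rw [Fin.cast_val_eq_self]; ring
      rw [← he]
      exact hall _
    exact (hΓ.2 this).elim
  by_cases hsing : Γ = {F i}
  · exact ⟨F i, hiΓ, Or.inl hsing⟩
  have hbig : (Γ.erase (F i)).Nonempty := by
    rw [Finset.nonempty_iff_ne_empty]
    intro hemp
    refine hsing (Finset.eq_singleton_iff_unique_mem.2 ⟨hiΓ, fun x hx => ?_⟩)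
    by_contra hne'
    have : x ∈ Γ.erase (F i) := Finset.mem_erase.2 ⟨hne', hx⟩
    simp [hemp] at this
  -- any H in Γ.erase (F i) is F j with j ≠ i, j ≠ i + 1
  have hform : ∀ H ∈ Γ.erase (F i), ∃ j, F j = H ∧ j ≠ i ∧ j ≠ i + 1 := by
    intro H hH
    obtain ⟨hne', hm⟩ := Finset.mem_erase.1 hH
    obtain ⟨j, rfl⟩ := hrep H hm
    refine ⟨j, rfl, fun e => hne' (by rw [e]), fun e => hi1Γ (by rw [← e]; exact hm)⟩
  by_cases hb : F (i - 1) ∈ Γ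
  · refine ⟨F i, hiΓ, Or.inr ⟨F (i-1), Finset.mem_erase.2
      ⟨fun e => fin_sub_one_ne i (hinj e), hb⟩, ?_⟩⟩
    intro H hH
    obtain ⟨j, rfl, hji, hji1⟩ := hform H hH
    by_cases hjm : j = i - 1
    · rw [hjm]
    · have hv := hvoid i j hjm hji hji1
      have : F j ∩ F i = c := by rw [Finset.inter_comm]; exact hv
      rw [this]
      exact Finset.subset_inter (hcsub _) (hcsub _)
  · obtain ⟨G, hG⟩ := hbig
    refine ⟨F i, hiΓ, Or.inr ⟨G, hG, ?_⟩⟩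
    have hval : ∀ H ∈ Γ.erase (F i), H ∩ F i = c := by
      intro H hH
      obtain ⟨j, rfl, hji, hji1⟩ := hform H hH
      have hjm : j ≠ i - 1 := fun e => hb (by rw [← e]; exact Finset.mem_of_mem_erase hH)
      rw [Finset.inter_comm]
      exact hvoid i j hjm hji hji1
    intro H hH
    rw [hval H hH, hval G hG]

open Classical in
noncomputable def fcNext (Δ : Finset (Finset V)) (p : Finset V × Finset V) : Finset V :=
  if h : ∃ Q, StrongNeighbor Δ p.2 Q ∧ Q ≠ p.1 then h.choose else ∅

noncomputable def fcChain (Δ : Finset (Finset V)) (p₀ : Finset V × Finset V) :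
    ℕ → Finset V × Finset V
  | 0 => p₀
  | k+1 => ((fcChain Δ p₀ k).2, fcNext Δ (fcChain Δ p₀ k))

lemma fcChain_invariant {Δ : Finset (Finset V)} (hcyc : IsCycle Δ)
    {p₀ : Finset V × Finset V} (hp₀ : StrongNeighbor Δ p₀.1 p₀.2) :
    ∀ k, StrongNeighbor Δ (fcChain Δ p₀ k).1 (fcChain Δ p₀ k).2 ∧
      fcNext Δ (fcChain Δ p₀ k) ≠ (fcChain Δ p₀ k).1 := by
  have hnextspec : ∀ p : Finset V × Finset V, StrongNeighbor Δ p.1 p.2 →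
      StrongNeighbor Δ p.2 (fcNext Δ p) ∧ fcNext Δ p ≠ p.1 := by
    intro p hp
    have hex : ∃ Q, StrongNeighbor Δ p.2 Q ∧ Q ≠ p.1 := by
      obtain ⟨G₁, G₂, h12, hG1, hG2⟩ := two_strong_neighbors hcyc hp.2.1
      rcases eq_or_ne G₁ p.1 with h | h
      · exact ⟨G₂, hG2, fun e => h12 (h.trans e.symm)⟩
      · exact ⟨G₁, hG1, h⟩
    classical
    rw [fcNext, dif_pos hex]
    exact hex.choose_spec
  intro k
  induction k with
  | zero => exact ⟨hp₀, (hnextspec p₀ hp₀).2⟩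
  | succ k ih =>
    have h1 : StrongNeighbor Δ (fcChain Δ p₀ (k+1)).1 (fcChain Δ p₀ (k+1)).2 :=
      (hnextspec _ ih.1).1
    exact ⟨h1, (hnextspec _ h1).2⟩

section Arc
variable {Δ : Finset (Finset V)} {N : ℕ} {F : Fin (N+3) → Finset V}

lemma natCast_val_eq {t : ℕ} (ht : t < N+3) : ((t : Fin (N+3))).val = t := by
  rw [Fin.val_natCast, Nat.mod_eq_of_lt ht]

lemma natCast_fin_inj {s t : ℕ} (hs : s < N+3) (ht : t < N+3)
    (h : (s : Fin (N+3)) = (t : Fin (N+3))) : s = t := by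
  have := congrArg Fin.val h
  rwa [natCast_val_eq hs, natCast_val_eq ht] at this

lemma arc_step (hcyc : IsCycle Δ) (hinj : Function.Injective F)
    (himg : Finset.image F Finset.univ = Δ)
    (hcons : ∀ i, StrongNeighbor Δ (F i) (F (i + 1)))
    (i : Fin (N+3)) (d : ℕ) (hd2 : 2 ≤ d) (hdm : d ≤ N+1) :
    F i ∩ F (i + (d : Fin (N+3))) ⊆ F (i + 1) ∨
    F i ∩ F (i + (d : Fin (N+3))) ⊆ F (i + ((d-1 : ℕ) : Fin (N+3))) := by
  set g : ℕ → Finset V := fun t => F (i + (t : Fin (N+3))) with hg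
  have hmemΔ : ∀ j, F j ∈ Δ := fun j => himg ▸ Finset.mem_image_of_mem F (Finset.mem_univ _)
  have ginj : ∀ {s t : ℕ}, s < N+3 → t < N+3 → g s = g t → s = t := by
    intro s t hs ht h
    exact natCast_fin_inj hs ht (add_left_cancel (hinj h))
  have gsucc : ∀ t : ℕ, g (t+1) = F ((i + (t : Fin (N+3))) + 1) := by
    intro t
    show F _ = F _
    congr 1
    push_cast
    ring
  have gstrong : ∀ t : ℕ, StrongNeighbor Δ (g t) (g (t+1)) := by
    intro t
    rw [gsucc]
    exact hcons _
  have g0 : g 0 = F i := by show F _ = F _; congr 1; push_cast; ring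
  have g1 : g 1 = F (i + 1) := by show F _ = F _; congr 1
  set Γ : Finset (Finset V) :=
    (Finset.range (d+1)).image (fun t : ℕ => g t) with hΓ
  have hmemΓ : ∀ t : ℕ, t ≤ d → g t ∈ Γ := by
    intro t ht
    exact Finset.mem_image_of_mem _ (Finset.mem_range.2 (by omega))
  have hformΓ : ∀ H ∈ Γ, ∃ t ≤ d, H = g t := by
    intro H hH
    obtain ⟨t, ht, rfl⟩ := Finset.mem_image.1 hH
    exact ⟨t, by have := Finset.mem_range.1 ht; omega, rfl⟩
  have hsubΔ : Γ ⊆ Δ := by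
    intro H hH
    obtain ⟨t, -, rfl⟩ := hformΓ H hH
    exact hmemΔ _
  have hproper : Γ ⊂ Δ := by
    refine (Finset.ssubset_iff_of_subset hsubΔ).2 ⟨g (d+1), hmemΔ _, ?_⟩
    intro hmem
    obtain ⟨t, ht, he⟩ := hformΓ _ hmem
    have := ginj (by omega) (by omega) he
    omega
  obtain ⟨L, hL⟩ := hcyc.2.2 Γ hproper ⟨g 0, hmemΓ 0 (by omega)⟩
  obtain ⟨t₀, ht₀, hLt⟩ := hformΓ L hL.1
  subst hLt
  have hΓ2 : 2 ≤ Γ.card := by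
    refine Finset.one_lt_card.2 ⟨g 0, hmemΓ 0 (by omega), g 1, hmemΓ 1 (by omega), ?_⟩
    intro h
    have := ginj (by omega) (by omega) h
    omega
  obtain ⟨K, hKm, hKj⟩ := leaf_joint hL hΓ2
  have hKΔ : K ∈ Δ := hsubΔ (Finset.mem_of_mem_erase hKm)
  have hKne : K ≠ g t₀ := (Finset.mem_erase.1 hKm).1
  -- claim A: if t₀ < d then K = g (t₀ + 1)
  have claimA : t₀ < d → K = g (t₀ + 1) := by
    intro hlt
    have hm : g (t₀+1) ∈ Γ.erase (g t₀) := by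
      refine Finset.mem_erase.2 ⟨?_, hmemΓ _ (by omega)⟩
      intro h
      have := ginj (by omega) (by omega) h
      omega
    have hs : g t₀ ∩ g (t₀+1) ⊆ K := by
      intro x hx
      rw [Finset.inter_comm] at hx
      exact (Finset.mem_inter.1 (hKj _ hm hx)).1
    rcases (gstrong t₀).2.2.2 K hKΔ hs with h | h
    · exact absurd h hKne
    · exact h
  -- claim B: if 1 ≤ t₀ then K = g (t₀ - 1)
  have claimB : 1 ≤ t₀ → K = g (t₀ - 1) := by
    intro hge
    have hm : g (t₀-1) ∈ Γ.erase (g t₀) := by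
      refine Finset.mem_erase.2 ⟨?_, hmemΓ _ (by omega)⟩
      intro h
      have := ginj (by omega) (by omega) h
      omega
    have hs : g (t₀-1) ∩ g t₀ ⊆ K := fun x hx =>
      (Finset.mem_inter.1 (hKj _ hm hx)).1
    have hstrong := gstrong (t₀ - 1)
    rw [show t₀ - 1 + 1 = t₀ by omega] at hstrong
    rcases hstrong.2.2.2 K hKΔ hs with h | h
    · exact h
    · exact absurd h hKne
  rcases Nat.eq_zero_or_pos t₀ with h0 | hpos
  · -- t₀ = 0 : K = g 1 and g d ∩ g 0 ⊆ g 1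
    subst h0
    have hK := claimA (by omega)
    left
    rw [← g0, ← g1]
    intro x hx
    rw [Finset.inter_comm] at hx
    have hm : g d ∈ Γ.erase (g 0) := by
      refine Finset.mem_erase.2 ⟨?_, hmemΓ _ le_rfl⟩
      intro h
      have := ginj (by omega) (by omega) h
      omega
    have := hKj _ hm hx
    rw [hK] at this
    exact (Finset.mem_inter.1 this).1
  · rcases Nat.lt_or_ge t₀ d with hint | hend
    · -- interior: contradiction
      exfalso
      have hA := claimA hint
      have hB := claimB hpos
      rw [hA] at hB
      have := ginj (by omega) (by omega) hB
      omega
    · -- t₀ = d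
      have ht0d : t₀ = d := by omega
      subst ht0d
      have hK := claimB (by omega)
      right
      rw [← g0]
      intro x hx
      have hm : g 0 ∈ Γ.erase (g t₀) := by
        refine Finset.mem_erase.2 ⟨?_, hmemΓ _ (by omega)⟩
        intro h
        have := ginj (by omega) (by omega) h
        omega
      have := hKj _ hm hx
      rw [hK] at this
      exact (Finset.mem_inter.1 this).1

end Arc

section Chord
variable {Δ : Finset (Finset V)} {N : ℕ} {F : Fin (N+3) → Finset V}

lemma natCast_sub_fin {s t : ℕ} (h : t ≤ s) :
    ((s - t : ℕ) : Fin (N+3)) = (s : Fin (N+3)) - (t : Fin (N+3)) := by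
  have : ((s - t : ℕ) : Fin (N+3)) + (t : Fin (N+3)) = (s : Fin (N+3)) := by
    rw [← Nat.cast_add]
    congr 1
    omega
  linear_combination this

lemma chord (hcyc : IsCycle Δ) (hinj : Function.Injective F)
    (himg : Finset.image F Finset.univ = Δ)
    (hcons : ∀ i, StrongNeighbor Δ (F i) (F (i + 1))) :
    ∀ d : ℕ, 2 ≤ d → d ≤ N+1 → ∀ i : Fin (N+3), ∀ t : ℕ, 1 ≤ t → t ≤ d - 1 →
      F i ∩ F (i + (d : Fin (N+3))) ⊆ F (i + (t : Fin (N+3))) := by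
  intro d
  induction d using Nat.strong_induction_on with
  | _ d ih =>
    intro hd2 hdm i t ht1 htd
    rcases arc_step hcyc hinj himg hcons i d hd2 hdm with hcase | hcase
    · by_cases ht : t = 1
      · subst ht
        simpa using hcase
      · -- t ≥ 2, d ≥ 3
        have hd3 : 3 ≤ d := by omega
        have key : F i ∩ F (i + (d : Fin (N+3))) ⊆
            F (i+1) ∩ F ((i+1) + ((d-1 : ℕ) : Fin (N+3))) := by
          refine Finset.subset_inter hcase ?_
          have he : (i+1) + ((d-1 : ℕ) : Fin (N+3)) = i + (d : Fin (N+3)) := by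
            rw [natCast_sub_fin (by omega)]
            push_cast
            ring
          rw [he]
          exact Finset.inter_subset_right
        refine key.trans ?_
        have := ih (d-1) (by omega) (by omega) (by omega) (i+1) (t-1) (by omega) (by omega)
        have he2 : (i+1) + ((t-1 : ℕ) : Fin (N+3)) = i + (t : Fin (N+3)) := by
          rw [natCast_sub_fin (by omega)]
          push_cast
          ring
        rwa [he2] at this
    · by_cases ht : t = d - 1
      · subst ht
        exact hcase
      · have hd3 : 3 ≤ d := by omega
        have key : F i ∩ F (i + (d : Fin (N+3))) ⊆
            F i ∩ F (i + ((d-1 : ℕ) : Fin (N+3))) :=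
          Finset.subset_inter Finset.inter_subset_left hcase
        exact key.trans (ih (d-1) (by omega) (by omega) (by omega) i t (by omega) (by omega))

end Chord

section ChordAll
variable {Δ : Finset (Finset V)} {N : ℕ} {F : Fin (N+3) → Finset V}

lemma chord_all (hcyc : IsCycle Δ) (hinj : Function.Injective F)
    (himg : Finset.image F Finset.univ = Δ)
    (hcons : ∀ i, StrongNeighbor Δ (F i) (F (i + 1)))
    (i j : Fin (N+3)) (h1 : j ≠ i - 1) (h2 : j ≠ i) (h3 : j ≠ i + 1) :
    ∀ k, F i ∩ F j ⊆ F k := by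
  set d : ℕ := (j - i).val with hd
  have hdlt : d < N+3 := (j - i).isLt
  have hij : i + (d : Fin (N+3)) = j := by
    rw [hd, Fin.cast_val_eq_self]; ring
  have hd0 : d ≠ 0 := by
    intro h
    apply h2
    have : j - i = 0 := by
      rw [← Fin.cast_val_eq_self (j - i), ← hd, h, Nat.cast_zero]
    have := sub_eq_zero.1 this
    exact this
  have hd1 : d ≠ 1 := by
    intro h
    apply h3
    rw [← hij, h, Nat.cast_one]
  have hdtop : d ≠ N+2 := by
    intro h
    apply h1
    have hneg : ((N+2 : ℕ) : Fin (N+3)) = -1 := by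
      have : ((N+2 : ℕ) : Fin (N+3)) + 1 = 0 := by
        rw [← Nat.cast_one (R := Fin (N+3)), ← Nat.cast_add]
        exact Fin.natCast_self (N+3)
      linear_combination this
    rw [← hij, h, hneg]
    ring
  intro k
  by_cases hki : k = i
  · subst hki; exact Finset.inter_subset_left
  by_cases hkj : k = j
  · subst hkj; exact Finset.inter_subset_right
  set t : ℕ := (k - i).val with htdef
  have htlt : t < N+3 := (k - i).isLt
  have hik : i + (t : Fin (N+3)) = k := by
    rw [htdef, Fin.cast_val_eq_self]; ring
  have ht0 : t ≠ 0 := by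
    intro h
    apply hki
    rw [← hik, h, Nat.cast_zero, add_zero]
  have htd : t ≠ d := by
    intro h
    apply hkj
    rw [← hik, h, hij]
  rcases Nat.lt_or_ge t d with hlt | hge
  · have := chord hcyc hinj himg hcons d (by omega) (by omega) i t (by omega) (by omega)
    rw [hij, hik] at this
    exact this
  · have hgt : d < t := by omega
    set d' : ℕ := N + 3 - d with hd'
    set t' : ℕ := t - d with ht'
    have hji : j + (d' : Fin (N+3)) = i := by
      rw [← hij, hd', add_assoc, ← Nat.cast_add, show d + (N + 3 - d) = N + 3 by omega,
        Fin.natCast_self, add_zero]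
    have hjk : j + (t' : Fin (N+3)) = k := by
      rw [← hij, ht', add_assoc, ← Nat.cast_add, show d + (t - d) = t by omega, hik]
    have := chord hcyc hinj himg hcons d' (by omega) (by omega) j t' (by omega) (by omega)
    rw [hji, hjk] at this
    intro x hx
    rw [Finset.inter_comm] at hx
    exact this hx

end ChordAll

lemma isCycle_structure {Δ : Finset (Finset V)} (hcyc : IsCycle Δ) :
    ∃ n : ℕ, ∃ F : Fin (n + 3) → Finset V, Function.Injective F ∧
      Finset.image F Finset.univ = Δ ∧
      (∀ i : Fin (n + 3), StrongNeighbor Δ (F i) (F (i + 1))) ∧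
      (∀ i j : Fin (n + 3), j ≠ i - 1 → j ≠ i → j ≠ i + 1 →
        F i ∩ F j = Finset.univ.inf' Finset.univ_nonempty F) := by
  classical
  obtain ⟨F₀, hF₀⟩ := hcyc.1
  obtain ⟨G₁, G₂, -, hG1, -⟩ := two_strong_neighbors hcyc hF₀
  set p₀ : Finset V × Finset V := (F₀, G₁) with hp₀def
  have hp₀ : StrongNeighbor Δ p₀.1 p₀.2 := hG1
  set f : ℕ → Finset V := fun k => (fcChain Δ p₀ k).1 with hf
  have hsucc : ∀ k, f (k+1) = (fcChain Δ p₀ k).2 := by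
    intro k
    simp [hf, fcChain]
  have hstep : ∀ k, StrongNeighbor Δ (f k) (f (k+1)) := by
    intro k
    rw [hsucc k]
    exact (fcChain_invariant hcyc hp₀ k).1
  have hnext : ∀ k, f (k+2) ≠ f k := by
    intro k
    have h1 : f (k+2) = fcNext Δ (fcChain Δ p₀ k) := by
      rw [show k+2 = (k+1)+1 from rfl, hsucc (k+1)]
      simp [fcChain]
    rw [h1]
    exact (fcChain_invariant hcyc hp₀ k).2
  have hfΔ : ∀ k, f k ∈ Δ := fun k => (hstep k).1
  have hex : ∃ b, ∃ a, a < b ∧ f a = f b := by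
    obtain ⟨x, hx, y, hy, hxy, he⟩ :=
      Finset.exists_ne_map_eq_of_card_lt_of_maps_to
        (s := Finset.range (Δ.card + 1)) (t := Δ) (by simp) (fun a _ => hfΔ a)
    rcases Nat.lt_or_ge x y with h | h
    · exact ⟨y, x, h, he⟩
    · exact ⟨x, y, by omega, he.symm⟩
  set b₀ := Nat.find hex with hb₀
  obtain ⟨a, hab, hfab⟩ := Nat.find_spec hex
  rw [← hb₀] at hab hfab
  have hinjb : ∀ x y, x < y → y < b₀ → f x ≠ f y := by
    intro x y h1 h2 e
    exact Nat.find_min hex h2 ⟨x, h1, e⟩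
  have hb1 : b₀ ≠ a + 1 := by
    intro h
    rw [h] at hfab
    exact (hstep a).2.2.1 hfab
  have hb2 : b₀ ≠ a + 2 := by
    intro h
    rw [h] at hfab
    exact hnext a hfab.symm
  obtain ⟨N, hN⟩ : ∃ N, b₀ = a + N + 3 := ⟨b₀ - a - 3, by omega⟩
  set F' : Fin (N+3) → Finset V := fun t => f (a + t.val) with hF'
  have hinj' : Function.Injective F' := by
    intro s t h
    apply Fin.ext
    have hs := s.isLt
    have ht := t.isLt
    rcases lt_trichotomy s.val t.val with hlt | heq | hgt
    · exact absurd h (hinjb (a + s.val) (a + t.val) (by omega) (by omega))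
    · exact heq
    · exact absurd h.symm (hinjb (a + t.val) (a + s.val) (by omega) (by omega))
  have hcons' : ∀ t : Fin (N+3), StrongNeighbor Δ (F' t) (F' (t+1)) := by
    intro t
    have ht := t.isLt
    rcases Nat.lt_or_ge t.val (N+2) with hlt | hge
    · have hval : (t+1).val = t.val + 1 := by
        rw [Fin.val_add]
        simp [Nat.mod_eq_of_lt (by omega : t.val + 1 < N + 3)]
      show StrongNeighbor Δ (f (a + t.val)) (f (a + (t+1).val))
      rw [hval]
      exact hstep (a + t.val)
    · have htv : t.val = N+2 := by omega
      have hval : (t+1).val = 0 := by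
        rw [Fin.val_add]
        simp [htv]
      show StrongNeighbor Δ (f (a + t.val)) (f (a + (t+1).val))
      rw [hval, htv]
      have := hstep (a + (N+2))
      rw [show a + (N+2) + 1 = b₀ by omega, ← hfab] at this
      simpa using this
  have himg' : Finset.image F' Finset.univ = Δ := by
    have hsub : Finset.image F' Finset.univ ⊆ Δ := by
      intro H hH
      obtain ⟨t, -, rfl⟩ := Finset.mem_image.1 hH
      exact hfΔ _
    by_contra hne
    have hss : Finset.image F' Finset.univ ⊂ Δ := lt_of_le_of_ne hsub hne
    obtain ⟨L, hL⟩ := hcyc.2.2 _ hss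
      ⟨F' 0, Finset.mem_image_of_mem F' (Finset.mem_univ 0)⟩
    exact no_leaf_of_cyclic_chain hinj' hcons' ⟨L, hL⟩
  refine ⟨N, F', hinj', himg', hcons', ?_⟩
  intro i j h1 h2 h3
  apply Finset.Subset.antisymm
  · exact Finset.le_inf' _ _ (fun k _ =>
      chord_all hcyc hinj' himg' hcons' i j h1 h2 h3 k)
  · exact Finset.subset_inter
      (Finset.le_iff_subset.1 (Finset.inf'_le _ (Finset.mem_univ i)))
      (Finset.le_iff_subset.1 (Finset.inf'_le _ (Finset.mem_univ j)))


theorem cycle_structure (Δ : Finset (Finset V)) (hΔ : IsFacetComplex Δ) :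
    IsCycle Δ ↔
      ∃ n : ℕ, ∃ F : Fin (n + 3) → Finset V, Function.Injective F ∧
        Finset.image F Finset.univ = Δ ∧
        (∀ i : Fin (n + 3), StrongNeighbor Δ (F i) (F (i + 1))) ∧
        (∀ i j : Fin (n + 3), j ≠ i - 1 → j ≠ i → j ≠ i + 1 →
          F i ∩ F j = Finset.univ.inf' Finset.univ_nonempty F) := by
  constructor
  · exact fun h => isCycle_structure h
  · rintro ⟨N, F, hinj, himg, hcons, hvoid⟩
    exact structure_isCycle hinj himg hcons hvoid
end
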